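/- arXiv:2212.12251 — 6 statements merged into one kernel-verified Lean document; each statement's English description precedes it below -/
import Mathlib

section
/- Arrow's Impossibility Theorem: If there are at least 3 alternatives and finitely many (at least 2) individuals, then any social welfare function (mapping profiles of strict linear orders on the alternatives to a strict linear order) satisfying the Pareto condition and Independence of Irrelevant Alternatives has a dictator, i.e., an individual whose strict preference over every pair of alternatives is always replicated by the social preference. -/
/-- A strict linear order (complete, transitive, irreflexive preference) on `X`. -/
def SLO (X : Type*) : Type _ := {r : X → X → Prop // IsStrictTotalOrder X r}

/-- Pareto: unanimous strict preference is replicated socially. -/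
def Pareto {X ι : Type*} (f : (ι → SLO X) → SLO X) : Prop :=
  ∀ P : ι → SLO X, ∀ a b : X, (∀ i, (P i).1 a b) → (f P).1 a b

/-- Independence of irrelevant alternatives. -/
def IIA {X ι : Type*} (f : (ι → SLO X) → SLO X) : Prop :=
  ∀ P P' : ι → SLO X, ∀ a b : X,
    (∀ i, (P i).1 a b ↔ (P' i).1 a b) → ((f P).1 a b ↔ (f P').1 a b)

/-- A coalition `D` is `(a,b)`-decisive. -/
def PairDecisive {X ι : Type*} (f : (ι → SLO X) → SLO X) (D : Set ι) (a b : X) : Prop :=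
  ∀ P : ι → SLO X, (∀ i ∈ D, (P i).1 a b) → (f P).1 a b

/-- A coalition is decisive if it is `(a,b)`-decisive for all distinct `a, b`. -/
def Decisive {X ι : Type*} (f : (ι → SLO X) → SLO X) (D : Set ι) : Prop :=
  ∀ a b : X, a ≠ b → PairDecisive f D a b

/-- `d` is a dictator for `f`. -/
def IsDictator {X ι : Type*} (f : (ι → SLO X) → SLO X) (d : ι) : Prop :=
  ∀ P : ι → SLO X, ∀ a b : X, (P d).1 a b → (f P).1 a b

/-!
With at least three alternatives, a coalition that wins a single pair `(a, b)` in the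
weak sense (all of `D` prefer `a` to `b`, everyone else prefers `b` to `a`) is already decisive:
a profile that puts a third alternative in between lets Pareto and transitivity carry the
decision to `(a, c)` and to `(c, b)`, and IIA transfers it to arbitrary profiles. A decisive
coalition splits: for any `E`, either `E` or `D \ E` is decisive, as one sees from the social
ranking of `a` and `c` in the cyclic profile `abc` on `E`, `bca` on `D \ E`, `cab` elsewhere. The
whole population is decisive by Pareto and the empty coalition is not, so peeling off one
individual at a time ends in a decisive singleton, i.e. a dictator.
-/

open Function

namespace SLO

variable {X : Type*}

instance (r : SLO X) : IsStrictTotalOrder X r.1 := r.2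

def ofInjective {Y : Type*} [LinearOrder Y] (u : X → Y) (hu : Injective u) : SLO X :=
  letI := LinearOrder.lift' u hu
  ⟨(· < ·), inferInstance⟩

open Classical in
noncomputable def top3Rank (a b c x : X) : ℕ :=
  if x = a then 0 else if x = b then 1 else if x = c then 2 else 3

/-- The order `a ≻ b ≻ c ≻ (everything else)`, the rest ordered by an arbitrary injection into
`Cardinal`. -/
noncomputable def top3 (a b c : X) : SLO X :=
  ofInjective (fun x => toLex (top3Rank a b c x, embeddingToCardinal x))
    fun _ _ h => embeddingToCardinal.injective (Prod.ext_iff.mp (toLex.injective h)).2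

theorem top3_rel_of_rank_lt {a b c x y : X} (h : top3Rank a b c x < top3Rank a b c y) :
    (top3 a b c).1 x y :=
  Prod.Lex.toLex_lt_toLex.2 (Or.inl h)

theorem top3_rel₁₂ {a b : X} (c : X) (hab : a ≠ b) : (top3 a b c).1 a b :=
  top3_rel_of_rank_lt (by simp [top3Rank, hab.symm])

theorem top3_rel₁₃ {a c : X} (b : X) (hac : a ≠ c) : (top3 a b c).1 a c :=
  top3_rel_of_rank_lt (by simp only [top3Rank, if_neg hac.symm]; split_ifs <;> simp)

theorem top3_rel₂₃ {a b c : X} (hab : a ≠ b) (hac : a ≠ c) (hbc : b ≠ c) :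
    (top3 a b c).1 b c :=
  top3_rel_of_rank_lt (by simp [top3Rank, hab.symm, hac.symm, hbc.symm])

end SLO

open SLO

section Arrow

variable {X ι : Type*} {f : (ι → SLO X) → SLO X} {D : Set ι} {a b c : X}

def WeaklyDecisive (f : (ι → SLO X) → SLO X) (D : Set ι) (a b : X) : Prop :=
  ∀ P : ι → SLO X, (∀ i ∈ D, (P i).1 a b) → (∀ i ∉ D, (P i).1 b a) → (f P).1 a b

theorem PairDecisive.weaklyDecisive (h : PairDecisive f D a b) :
    WeaklyDecisive f D a b :=
  fun P hD _ => h P hD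

theorem weaklyDecisive_of_profile (hI : IIA f) (Q : ι → SLO X)
    (hQD : ∀ i ∈ D, (Q i).1 a b) (hQDc : ∀ i ∉ D, (Q i).1 b a) (hQ : (f Q).1 a b) :
    WeaklyDecisive f D a b := by
  intro P hPD hPDc
  refine (hI P Q a b fun i => ?_).mpr hQ
  by_cases hi : i ∈ D
  · exact iff_of_true (hPD i hi) (hQD i hi)
  · exact iff_of_false (asymm (hPDc i hi)) (asymm (hQDc i hi))

theorem WeaklyDecisive.spread_right (hP : Pareto f) (hI : IIA f) (h : WeaklyDecisive f D a b)
    (hab : a ≠ b) (hac : a ≠ c) (hbc : b ≠ c) : PairDecisive f D a c := by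
  classical
  intro P hPD
  set Q : ι → SLO X := fun i =>
    if i ∈ D then top3 a b c else if (P i).1 a c then top3 b a c else top3 b c a with hQ
  -- `Q` agrees with `P` on `{a, c}`, all rank `b` above `c`, and only `D` ranks `a` above `b`
  have hab_soc : (f Q).1 a b := h Q (fun i hi => by simpa [hQ, hi] using top3_rel₁₂ c hab)
    fun i hi => by
      simp only [hQ, if_neg hi]
      split_ifs
      exacts [top3_rel₁₂ c hab.symm, top3_rel₁₃ c hab.symm]
  have hbc_soc : (f Q).1 b c := hP Q b c fun i => by
    simp only [hQ]
    split_ifs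
    exacts [top3_rel₂₃ hab hac hbc, top3_rel₁₃ a hbc, top3_rel₁₂ a hbc]
  refine (hI P Q a c fun i => ?_).mpr (_root_.trans hab_soc hbc_soc)
  simp only [hQ]
  split_ifs with hi hPi
  · exact iff_of_true (hPD i hi) (top3_rel₁₃ b hac)
  · exact iff_of_true hPi (top3_rel₂₃ hab.symm hbc hac)
  · exact iff_of_false hPi (asymm (top3_rel₂₃ hbc hab.symm hac.symm))

theorem WeaklyDecisive.spread_left (hP : Pareto f) (hI : IIA f) (h : WeaklyDecisive f D a b)
    (hab : a ≠ b) (hac : a ≠ c) (hbc : b ≠ c) : PairDecisive f D c b := by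
  classical
  intro P hPD
  set Q : ι → SLO X := fun i =>
    if i ∈ D then top3 c a b else if (P i).1 c b then top3 c b a else top3 b c a with hQ
  -- `Q` agrees with `P` on `{c, b}`, all rank `c` above `a`, and only `D` ranks `a` above `b`
  have hca_soc : (f Q).1 c a := hP Q c a fun i => by
    simp only [hQ]
    split_ifs
    exacts [top3_rel₁₂ b hac.symm, top3_rel₁₃ b hac.symm, top3_rel₂₃ hbc hab.symm hac.symm]
  have hab_soc : (f Q).1 a b :=
    h Q (fun i hi => by simpa [hQ, hi] using top3_rel₂₃ hac.symm hbc.symm hab) fun i hi => by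
      simp only [hQ, if_neg hi]
      split_ifs
      exacts [top3_rel₂₃ hbc.symm hac.symm hab.symm, top3_rel₁₃ c hab.symm]
  refine (hI P Q c b fun i => ?_).mpr (_root_.trans hca_soc hab_soc)
  simp only [hQ]
  split_ifs with hi hPi
  · exact iff_of_true (hPD i hi) (top3_rel₁₃ a hbc.symm)
  · exact iff_of_true hPi (top3_rel₁₂ a hbc.symm)
  · exact iff_of_false hPi (asymm (top3_rel₁₂ a hbc))

theorem WeaklyDecisive.pairDecisive_right (hX : 3 ≤ ENat.card X) (hP : Pareto f) (hI : IIA f)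
    (h : WeaklyDecisive f D a b) (hab : a ≠ b) (hac : a ≠ c) : PairDecisive f D a c := by
  obtain ⟨z, hza, hzb⟩ := ENat.exists_ne_ne_of_three_le hX a b
  rcases eq_or_ne c b with rfl | hcb
  · exact (h.spread_right hP hI hab hza.symm hzb.symm).weaklyDecisive.spread_right hP hI
      hza.symm hab hzb
  · exact h.spread_right hP hI hab hac hcb.symm

theorem WeaklyDecisive.pairDecisive_left (hX : 3 ≤ ENat.card X) (hP : Pareto f) (hI : IIA f)
    (h : WeaklyDecisive f D a b) (hab : a ≠ b) (hcb : c ≠ b) : PairDecisive f D c b := by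
  obtain ⟨z, hza, hzb⟩ := ENat.exists_ne_ne_of_three_le hX a b
  rcases eq_or_ne c a with rfl | hca
  · exact (h.spread_left hP hI hab hza.symm hzb.symm).weaklyDecisive.spread_left hP hI
      hzb hza hab.symm
  · exact h.spread_left hP hI hab hca.symm hcb.symm

theorem WeaklyDecisive.decisive (hX : 3 ≤ ENat.card X) (hP : Pareto f) (hI : IIA f)
    (h : WeaklyDecisive f D a b) (hab : a ≠ b) : Decisive f D := by
  intro x y hxy
  obtain ⟨z, hza, hzx⟩ := ENat.exists_ne_ne_of_three_le hX a x
  have haz : PairDecisive f D a z := h.pairDecisive_right hX hP hI hab hza.symm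
  have hxz : PairDecisive f D x z :=
    haz.weaklyDecisive.pairDecisive_left hX hP hI hza.symm hzx.symm
  exact hxz.weaklyDecisive.pairDecisive_right hX hP hI hzx.symm hxy

theorem nontrivial_of_three_le_card (hX : 3 ≤ ENat.card X) : Nontrivial X :=
  (ENat.one_lt_card_iff_nontrivial X).mp (lt_of_lt_of_le (by norm_num) hX)

theorem Decisive.mono {E : Set ι} (hDE : D ⊆ E) (hD : Decisive f D) : Decisive f E :=
  fun a b hab P hP => hD a b hab P fun i hi => hP i (hDE hi)

theorem decisive_univ (hP : Pareto f) : Decisive f Set.univ :=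
  fun a b _ P h => hP P a b fun i => h i trivial

theorem not_decisive_empty [Nontrivial X] (f : (ι → SLO X) → SLO X) : ¬ Decisive f ∅ := by
  obtain ⟨a, b, hab⟩ := exists_pair_ne X
  intro h
  let P : ι → SLO X := fun _ => top3 a b a
  exact asymm (h a b hab P (by simp)) (h b a hab.symm P (by simp))

theorem Decisive.isDictator {d : ι} (h : Decisive f {d}) : IsDictator f d :=
  fun P a b had => h a b (ne_of_irrefl had) P (by simpa using had)

theorem Decisive.or_diff (hX : 3 ≤ ENat.card X) (hP : Pareto f) (hI : IIA f)
    (hD : Decisive f D) (E : Set ι) : Decisive f E ∨ Decisive f (D \ E) := by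
  classical
  have := nontrivial_of_three_le_card hX
  obtain ⟨a, b, hab⟩ := exists_pair_ne X
  obtain ⟨c, hca, hcb⟩ := ENat.exists_ne_ne_of_three_le hX a b
  set Q : ι → SLO X := fun i =>
    if i ∈ E then top3 a b c else if i ∈ D then top3 b c a else top3 c a b with hQ
  have hbc_soc : (f Q).1 b c := hD b c hcb.symm Q fun i hi => by
    simp only [hQ, if_pos hi]
    split_ifs
    exacts [top3_rel₂₃ hab hca.symm hcb.symm, top3_rel₁₂ a hcb.symm]
  rcases trichotomous_of (f Q).1 a c with hac_soc | rfl | hca_soc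
  · left
    refine WeaklyDecisive.decisive hX hP hI ?_ hca.symm
    refine weaklyDecisive_of_profile hI Q (fun i hi => ?_) (fun i hi => ?_) hac_soc
    · simpa [hQ, hi] using top3_rel₁₃ b hca.symm
    · simp only [hQ, if_neg hi]
      split_ifs
      exacts [top3_rel₂₃ hcb.symm hab.symm hca, top3_rel₁₂ b hca]
  · exact (hca rfl).elim
  · right
    refine WeaklyDecisive.decisive hX hP hI ?_ hab.symm
    refine weaklyDecisive_of_profile hI Q (fun i hi => ?_) (fun i hi => ?_)
      (_root_.trans hbc_soc hca_soc)
    · simpa [hQ, hi.1, hi.2] using top3_rel₁₃ c hab.symm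
    · simp only [hQ]
      split_ifs with hiE hiD
      · exact top3_rel₁₂ c hab
      · exact absurd ⟨hiD, hiE⟩ hi
      · exact top3_rel₂₃ hca hcb hab

theorem exists_decisive_singleton (hX : 3 ≤ ENat.card X) (hP : Pareto f) (hI : IIA f)
    (s : Finset ι) (hs : Decisive f s) : ∃ d, Decisive f {d} := by
  classical
  have := nontrivial_of_three_le_card hX
  induction s using Finset.induction_on with
  | empty => exact absurd (by simpa using hs) (not_decisive_empty f)
  | insert i s _ ih =>
    rcases hs.or_diff hX hP hI {i} with h | h
    · exact ⟨i, h⟩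
    · exact ih (h.mono (by simp))

end Arrow

theorem arrow_impossibility_general {X ι : Type*} [Fintype X] [Fintype ι]
    (hX : 3 ≤ Fintype.card X)
    (f : (ι → SLO X) → SLO X) (hP : Pareto f) (hI : IIA f) :
    ∃ d : ι, IsDictator f d := by
  have hX' : 3 ≤ ENat.card X := by simpa [ENat.card_eq_coe_fintype_card] using hX
  obtain ⟨d, hd⟩ :=
    exists_decisive_singleton hX' hP hI Finset.univ (by simpa using decisive_univ hP)
  exact ⟨d, hd.isDictator⟩

theorem arrow_impossibility {X ι : Type*} [Fintype X] [Fintype ι]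
    (hX : 3 ≤ Fintype.card X) (hι : 2 ≤ Fintype.card ι)
    (f : (ι → SLO X) → SLO X) (hP : Pareto f) (hI : IIA f) :
    ∃ d : ι, IsDictator f d :=
  arrow_impossibility_general hX f hP hI
end

section
/- Field-Expansion Lemma: For a social welfare function satisfying Pareto and IIA on at least 3 alternatives, if a coalition D ⊆ N is (a,b)-decisive for some pair of distinct alternatives a, b, then D is decisive for every pair of alternatives. -/
/-!
To pass from `(a,b)`- to `(a,c)`-decisiveness, take a profile in which every member of `D` prefers
`a` to `c` and replace it by one with the same individual comparisons of `a` and `c`, in which the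
members of `D` rank `a ≻ b ≻ c` and everyone else puts `b` above both. Socially `a ≻ b` by
decisiveness and `b ≻ c` by Pareto, so `a ≻ c`, and IIA carries this back to the original profile.
Reversing all preferences, individual and social, turns this into the passage from `(a,b)` to
`(c,b)`, and chaining such moves through a third alternative reaches every pair.
-/

namespace SLO

variable {X : Type*}

protected theorem trans (r : SLO X) {x y z : X} (hxy : r.1 x y) (hyz : r.1 y z) : r.1 x z :=
  r.2.trans x y z hxy hyz

protected theorem asymm (r : SLO X) {x y : X} (hxy : r.1 x y) : ¬ r.1 y x :=
  fun hyx => r.2.irrefl x (r.trans hxy hyx)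

def swap (r : SLO X) : SLO X :=
  haveI := r.2
  ⟨Function.swap r.1, inferInstance⟩

/-- Sorts `X` by the key `g`, breaking ties by a well-ordering of `X`. -/
noncomputable def ofRank {α : Type*} [LinearOrder α] (g : X → α) : SLO X :=
  letI : LinearOrder X := WellOrderingRel.isWellOrder.linearOrder
  letI : LinearOrder X := LinearOrder.lift' (fun x => toLex (g x, x))
    fun _ _ h => congrArg Prod.snd (toLex.injective h)
  ⟨(· < ·), inferInstance⟩

variable {α : Type*} [LinearOrder α] {g : X → α} {x y : X}

theorem ofRank_of_lt (h : g x < g y) : (ofRank g).1 x y :=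
  letI : LinearOrder X := WellOrderingRel.isWellOrder.linearOrder
  Prod.Lex.toLex_lt_toLex.2 (Or.inl h)

theorem not_ofRank_of_lt (h : g y < g x) : ¬ (ofRank g).1 x y :=
  fun hxy => (ofRank g).asymm hxy (ofRank_of_lt h)

end SLO

section FieldExpansion

variable {X ι : Type*} {f : (ι → SLO X) → SLO X} {D : Set ι} {a b c : X}

def dualSWF (f : (ι → SLO X) → SLO X) (P : ι → SLO X) : SLO X :=
  (f fun i => (P i).swap).swap

theorem Pareto.dualSWF (hP : Pareto f) : Pareto (dualSWF f) :=
  fun _ a b h => hP _ b a h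

theorem IIA.dualSWF (hI : IIA f) : IIA (dualSWF f) :=
  fun _ _ a b h => hI _ _ b a h

theorem PairDecisive.dualSWF (hD : PairDecisive f D a b) : PairDecisive (dualSWF f) D b a :=
  fun _ h => hD _ h

theorem PairDecisive.expand_right (hP : Pareto f) (hI : IIA f) (hab : a ≠ b) (hac : a ≠ c)
    (hD : PairDecisive f D a b) : PairDecisive f D a c := by
  classical
  rcases eq_or_ne b c with rfl | hbc
  · exact hD
  intro P hPD
  let rank : ι → X → ℕ := fun i z =>
    if z = a then (if (P i).1 a c then 1 else 3)
    else if z = c then (if (P i).1 a c then 3 else 1)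
    else if i ∈ D then 2 else 0
  let P' : ι → SLO X := fun i => SLO.ofRank (rank i)
  have rank_a : ∀ i, rank i a = if (P i).1 a c then 1 else 3 := fun i => if_pos rfl
  have rank_c : ∀ i, rank i c = if (P i).1 a c then 3 else 1 := fun i => by
    simp only [rank, if_neg hac.symm, if_true]
  have rank_b : ∀ i, rank i b = if i ∈ D then 2 else 0 := fun i => by
    simp only [rank, if_neg hab.symm, if_neg hbc]
  have social_ab : (f P').1 a b := hD P' fun i hi => SLO.ofRank_of_lt <| by
    simp only [rank_a, rank_b, if_pos (hPD i hi), if_pos hi]; omega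
  have social_bc : (f P').1 b c := hP P' b c fun i => SLO.ofRank_of_lt <| by
    rw [rank_b, rank_c]
    by_cases hi : i ∈ D
    · simp only [if_pos hi, if_pos (hPD i hi)]; omega
    · simp only [if_neg hi]; split_ifs <;> omega
  have agree_ac : ∀ i, (P' i).1 a c ↔ (P i).1 a c := fun i => by
    by_cases h : (P i).1 a c
    · exact iff_of_true (SLO.ofRank_of_lt (by simp only [rank_a, rank_c, if_pos h]; omega)) h
    · exact iff_of_false (SLO.not_ofRank_of_lt (by simp only [rank_a, rank_c, if_neg h]; omega)) h
  exact (hI P' P a c agree_ac).1 ((f P').trans social_ab social_bc)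

theorem PairDecisive.expand_left (hP : Pareto f) (hI : IIA f) (hab : a ≠ b) (hcb : c ≠ b)
    (hD : PairDecisive f D a b) : PairDecisive f D c b :=
  -- `dualSWF (dualSWF f)` is `f` by definition.
  (hD.dualSWF.expand_right hP.dualSWF hI.dualSWF hab.symm hcb.symm).dualSWF

end FieldExpansion

theorem Fintype.exists_ne_ne_of_two_lt_card {X : Type*} [Fintype X] (h : 2 < Fintype.card X)
    (a b : X) : ∃ c, c ≠ a ∧ c ≠ b := by
  classical
  obtain ⟨c, -, hc⟩ := Finset.exists_mem_notMem_of_card_lt_card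
    (s := {a, b}) (t := Finset.univ) (Finset.card_le_two.trans_lt h)
  exact ⟨c, by simpa [not_or] using hc⟩

theorem field_expansion_general {X ι : Type*} [Fintype X]
    (hX : 3 ≤ Fintype.card X)
    (f : (ι → SLO X) → SLO X) (hP : Pareto f) (hI : IIA f)
    (D : Set ι) (a b : X) (hab : a ≠ b) (hD : PairDecisive f D a b) :
    Decisive f D := by
  intro x y hxy
  rcases ne_or_eq a y with hay | rfl
  · exact (hD.expand_right hP hI hab hay).expand_left hP hI hay hxy
  · obtain ⟨c, hca, hcb⟩ := Fintype.exists_ne_ne_of_two_lt_card hX a b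
    have hD_ac := hD.expand_right hP hI hab hca.symm
    have hD_bc := hD_ac.expand_left hP hI hca.symm hcb.symm
    have hD_ba := hD_bc.expand_right hP hI hcb.symm hab.symm
    exact hD_ba.expand_left hP hI hab.symm hxy

theorem field_expansion {X ι : Type*} [Fintype X] [Finite ι]
    (hX : 3 ≤ Fintype.card X)
    (f : (ι → SLO X) → SLO X) (hP : Pareto f) (hI : IIA f)
    (D : Set ι) (a b : X) (hab : a ≠ b) (hD : PairDecisive f D a b) :
    Decisive f D :=
  field_expansion_general hX f hP hI D a b hab hD
end

section
/- Two-dimensional Sperner lemma: For any triangulation of a triangle with vertices v_1, v_2, v_3 and any Sperner labelling of the triangulation's vertices (vertex v_k receives label k, vertices on the edge between v_j and v_k receive label j or k, interior vertices receive any label in {1,2,3}), there exists a triangle of the triangulation whose three vertices carry all three labels 1, 2, 3. -/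
/-- A triangulation of the standard `n`-simplex `stdSimplex ℝ (Fin (n+1))`:
a finite family of geometric `n`-cells (given by their vertex sets), each affinely
independent with `n+1` vertices, covering the simplex and meeting face-to-face. -/
structure Triangulation (n : ℕ) where
  cells : Finset (Finset (Fin (n + 1) → ℝ))
  card_cells : ∀ s ∈ cells, s.card = n + 1
  indep : ∀ s ∈ cells,
    AffineIndependent ℝ (Subtype.val : {x // x ∈ s} → (Fin (n + 1) → ℝ))
  covers : (⋃ s ∈ cells, convexHull ℝ (s : Set (Fin (n + 1) → ℝ)))
      = stdSimplex ℝ (Fin (n + 1))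
  face_to_face : ∀ s ∈ cells, ∀ t ∈ cells,
    convexHull ℝ (s : Set (Fin (n + 1) → ℝ)) ∩ convexHull ℝ (t : Set (Fin (n + 1) → ℝ))
      = convexHull ℝ ((s ∩ t : Finset (Fin (n + 1) → ℝ)) : Set (Fin (n + 1) → ℝ))

/-- The vertex set of a triangulation. -/
noncomputable def Triangulation.verts {n : ℕ} (T : Triangulation n) : Finset (Fin (n + 1) → ℝ) :=
  T.cells.sup id

/-- A Sperner labelling: every vertex of the triangulation receives a label whose
barycentric coordinate (with respect to the standard simplex) at that vertex is positive,
i.e. a vertex in the interior of the face spanned by `{v_i : i ∈ I}` gets a label in `I`. -/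
def IsSpernerLabelling {n : ℕ} (T : Triangulation n)
    (L : (Fin (n + 1) → ℝ) → Fin (n + 1)) : Prop :=
  ∀ v ∈ T.verts, 0 < v (L v)

/-!
Door counting. A door is an ordered pair of vertices of a common cell labelled `0` and `1`.
Counted by cells, a cell with `n₀` vertices labelled `0` and `n₁` labelled `1` contains
`n₀ * n₁` doors, an even number unless the cell is fully labelled. Counted by doors, an edge
lies in exactly one cell if it lies on the boundary of the simplex and in exactly two otherwise;
a door can only lie on the boundary side `x₂ = 0`, since its labels force `x₀ > 0` at one end and
`x₁ > 0` at the other. The vertices on that side subdivide a segment whose ends are labelled `0`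
and `1`, so the label changes along it are odd in number. Hence some cell is fully labelled.

Two distinct cells sharing an edge `uv` lie on opposite sides of it, as measured by the triple
product `x ↦ x ⬝ᵥ u ⨯₃ v`; this bounds the number of cells through an edge by two, and by one on
the boundary. The points just beyond an interior edge are covered by other cells, and by
closedness so is the edge.
-/

open Finset Matrix

local notation "ℝ³" => Fin 3 → ℝ

section AdjacentIn

variable {α : Type*} [LinearOrder α]

def AdjacentIn (P : Finset α) (x y : α) : Prop := x ≠ y ∧ ∀ z ∈ P, z ∉ Set.uIoo x y

lemma adjacentIn_comm {P : Finset α} {x y : α} : AdjacentIn P x y ↔ AdjacentIn P y x := by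
  simp only [AdjacentIn, ne_comm, Set.uIoo_comm]

variable {P : Finset α} {a : α}

lemma adjacentIn_insert_iff_of_forall_lt (ha : ∀ z ∈ P, z < a) {x y : α} (hx : x ∈ P)
    (hy : y ∈ P) : AdjacentIn (insert a P) x y ↔ AdjacentIn P x y := by
  have : a ∉ Set.uIoo x y := fun h => (max_lt (ha x hx) (ha y hy)).not_gt h.2
  simp [AdjacentIn, this]

lemma adjacentIn_insert_iff_eq_max' (ha : ∀ z ∈ P, z < a) (hP : P.Nonempty) {x : α}
    (hx : x ∈ P) : AdjacentIn (insert a P) x a ↔ x = P.max' hP := by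
  have hxa : x < a := ha x hx
  simp only [AdjacentIn, Set.uIoo_of_lt hxa, forall_mem_insert, Set.mem_Ioo, lt_irrefl,
    and_false, not_false_eq_true, true_and, hxa.ne, ne_eq]
  constructor
  · intro h
    by_contra hne
    exact h _ (P.max'_mem hP) ⟨lt_of_le_of_ne (P.le_max' x hx) hne, ha _ (P.max'_mem hP)⟩
  · rintro rfl z hz ⟨hlt, -⟩
    exact (P.le_max' z hz).not_gt hlt

open scoped Classical in
lemma card_adjacentIn_insert (ha : ∀ z ∈ P, z < a) (hP : P.Nonempty) (p : α → Prop) :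
    #{q ∈ insert a P ×ˢ insert a P | AdjacentIn (insert a P) q.1 q.2 ∧ p q.1 ∧ ¬ p q.2} =
      #{q ∈ P ×ˢ P | AdjacentIn P q.1 q.2 ∧ p q.1 ∧ ¬ p q.2} +
        ((if p (P.max' hP) ∧ ¬ p a then 1 else 0) + (if p a ∧ ¬ p (P.max' hP) then 1 else 0)) := by
  have haP : a ∉ P := fun h => (ha a h).false
  have hm : P.max' hP ∈ P := P.max'_mem hP
  simp only [card_filter, sum_product, sum_insert haP]
  have hself : AdjacentIn (insert a P) a a ↔ False := by simp [AdjacentIn]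
  have hleft : ∑ y ∈ P, (if AdjacentIn (insert a P) a y ∧ p a ∧ ¬ p y then 1 else 0) =
      if p a ∧ ¬ p (P.max' hP) then 1 else 0 := by
    rw [sum_eq_single_of_mem _ hm]
    · simp [adjacentIn_comm (x := a), adjacentIn_insert_iff_eq_max' ha hP hm]
    · intro y hy hym
      simp [adjacentIn_comm (x := a), adjacentIn_insert_iff_eq_max' ha hP hy, hym]
  have hright : ∑ x ∈ P, (if AdjacentIn (insert a P) x a ∧ p x ∧ ¬ p a then 1 else 0) =
      if p (P.max' hP) ∧ ¬ p a then 1 else 0 := by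
    rw [sum_eq_single_of_mem _ hm]
    · simp [adjacentIn_insert_iff_eq_max' ha hP hm]
    · intro x hx hxm
      simp [adjacentIn_insert_iff_eq_max' ha hP hx, hxm]
  have hrest : ∀ x ∈ P, ∑ y ∈ P, (if AdjacentIn (insert a P) x y ∧ p x ∧ ¬ p y then 1 else 0) =
      ∑ y ∈ P, (if AdjacentIn P x y ∧ p x ∧ ¬ p y then 1 else 0) := fun x hx =>
    sum_congr rfl fun y hy => by rw [adjacentIn_insert_iff_of_forall_lt ha hx hy]
  rw [hself, hleft, sum_add_distrib, hright, sum_congr rfl hrest]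
  simp only [false_and, if_false, zero_add]
  ring

open scoped Classical in
theorem odd_card_adjacentIn_iff (P : Finset α) (hP : P.Nonempty) (p : α → Prop) :
    Odd #{q ∈ P ×ˢ P | AdjacentIn P q.1 q.2 ∧ p q.1 ∧ ¬ p q.2} ↔
      Xor (p (P.min' hP)) (p (P.max' hP)) := by
  induction P using Finset.induction_on_max with
  | empty => exact absurd hP (by simp)
  | insert a P ha ih =>
    rcases P.eq_empty_or_nonempty with rfl | hP'
    · simp [AdjacentIn, filter_singleton]
    · rw [card_adjacentIn_insert ha hP', Nat.odd_add, ih hP']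
      have hmin : (insert a P).min' hP = P.min' hP' := by
        rw [min'_insert _ _ hP', min_eq_right (ha _ (P.min'_mem hP')).le]
      have hmax : (insert a P).max' hP = a := by
        rw [max'_insert _ _ hP', max_eq_left (ha _ (P.max'_mem hP')).le]
      rw [hmin, hmax]
      by_cases h1 : p (P.min' hP') <;> by_cases h2 : p (P.max' hP') <;> by_cases h3 : p a <;>
        simp [h1, h2, h3, Xor]

end AdjacentIn

lemma even_card_filter_mul_card_filter {β : Type*} {s : Finset β} (hs : Odd #s) (f : β → Fin 3)
    (hf : s.image f ≠ univ) : Even (#{x ∈ s | f x = 0} * #{x ∈ s | f x = 1}) := by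
  obtain ⟨i, hi⟩ : ∃ i, i ∉ s.image f := by simpa [eq_univ_iff_forall] using hf
  simp only [mem_image, not_exists, not_and] at hi
  rcases (by decide : ∀ j : Fin 3, j = 0 ∨ j = 1 ∨ j = 2) i with rfl | rfl | rfl
  · simp [filter_eq_empty_iff.2 hi]
  · simp [filter_eq_empty_iff.2 hi]
  · have h1 : #{x ∈ s | f x = 1} = #{x ∈ s | ¬ f x = 0} := by
      congr 1
      refine filter_congr fun x hx => ?_
      have := hi x hx
      revert this
      generalize f x = j
      fin_cases j <;> simp
    rw [h1, Nat.even_mul]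
    rw [← card_filter_add_card_filter_not (s := s) (fun x => f x = 0), Nat.odd_add'] at hs
    by_cases h : Even #{x ∈ s | f x = 0}
    · exact Or.inl h
    · exact Or.inr (Nat.not_odd_iff_even.1 fun ho => h (hs.1 ho))

lemma LinearMap.nonneg_of_mem_convexHull {E : Type*} [AddCommGroup E] [Module ℝ E]
    (φ : E →ₗ[ℝ] ℝ) {A : Set E} (hA : ∀ y ∈ A, 0 ≤ φ y) {x : E} (hx : x ∈ convexHull ℝ A) :
    0 ≤ φ x :=
  let ⟨y, hy, hyx⟩ := (φ.concaveOn convex_univ).exists_le_of_mem_convexHull (Set.subset_univ A) hx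
  (hA y hy).trans hyx

lemma LinearMap.mem_convexHull_filter_eq_zero {E : Type*} [AddCommGroup E] [Module ℝ E]
    (φ : E →ₗ[ℝ] ℝ) {F : Finset E} (hF : ∀ y ∈ F, 0 ≤ φ y) {x : E}
    (hx : x ∈ convexHull ℝ (F : Set E)) (hφx : φ x = 0) :
    x ∈ convexHull ℝ ({y ∈ F | φ y = 0} : Set E) := by
  rw [mem_convexHull'] at hx
  obtain ⟨w, hw0, hw1, hwx⟩ := hx
  have hterm : ∀ y ∈ F, w y * φ y = 0 := by
    refine (sum_eq_zero_iff_of_nonneg fun y hy => mul_nonneg (hw0 y hy) (hF y hy)).1 ?_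
    rw [← hwx, map_sum] at hφx
    simpa using hφx
  have hsupp : ∀ y ∈ F, w y ≠ 0 → φ y = 0 := fun y hy hne =>
    (mul_eq_zero.1 (hterm y hy)).resolve_left hne
  rw [← coe_filter, mem_convexHull']
  refine ⟨w, fun y hy => hw0 y (mem_filter.1 hy).1, ?_, ?_⟩
  · rwa [sum_filter_of_ne hsupp]
  · rwa [sum_filter_of_ne fun y hy hne => hsupp y hy fun h => hne (by simp [h])]

lemma AffineIndependent.mem_of_mem_convexHull {E : Type*} [AddCommGroup E] [Module ℝ E]
    {s A : Finset E} (hs : AffineIndependent ℝ ((↑) : s → E)) (hA : A ⊆ s)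
    {x : E} (hx : x ∈ s) (hxA : x ∈ convexHull ℝ (A : Set E)) : x ∈ A := by
  have h := hs.convexHull_inter (t₁ := {x}) (t₂ := A) (by simpa using hx) hA
  have : x ∈ convexHull ℝ (({x} : Set E) ∩ A) := by
    rw [coe_singleton] at h
    rw [h]
    exact ⟨by simp, hxA⟩
  by_contra hxA'
  rw [Set.singleton_inter_eq_empty.2 (mt mem_coe.1 hxA'), convexHull_empty] at this
  exact this

lemma smul_add_smul_add_smul_mem_convexHull {E : Type*} [AddCommGroup E] [Module ℝ E]
    {A : Set E} {x y z : E} (hx : x ∈ A) (hy : y ∈ A) (hz : z ∈ A) {a b c : ℝ} (ha : 0 ≤ a)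
    (hb : 0 ≤ b) (hc : 0 ≤ c) (habc : a + b + c = 1) : a • x + b • y + c • z ∈ convexHull ℝ A := by
  have := (convex_convexHull ℝ A).sum_mem (t := univ) (w := ![a, b, c]) (z := ![x, y, z])
    (by simp [Fin.forall_fin_succ, ha, hb, hc]) (by simp [Fin.sum_univ_three, habc])
    (by simp [Fin.forall_fin_succ, subset_convexHull ℝ A hx, subset_convexHull ℝ A hy,
      subset_convexHull ℝ A hz])
  simpa [Fin.sum_univ_three, add_assoc] using this

lemma exists_smul_add_smul_add_smul_mem_convexHull {E : Type*} [AddCommGroup E] [Module ℝ E]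
    {A : Set E} {u v w z : E} (hu : u ∈ A) (hv : v ∈ A) (hw : w ∈ A) {a b c : ℝ} (hc : 0 ≤ c)
    (habc : a + b + c = 1) (hz : z = a • u + b • v + c • w) :
    ∃ ε : ℝ, 0 < ε ∧ ε ≤ 1 ∧ ((1 - ε) / 2) • u + ((1 - ε) / 2) • v + ε • z ∈ convexHull ℝ A := by
  set ε := 1 / (2 * (1 + |a| + |b|))
  have hε : 0 < ε := by positivity
  have hεK : ε + ε * |a| + ε * |b| = 1 / 2 := by
    simp only [ε]; field_simp
  have hεa := mul_le_mul_of_nonneg_left (neg_abs_le a) hε.le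
  have hεb := mul_le_mul_of_nonneg_left (neg_abs_le b) hε.le
  refine ⟨ε, hε, by nlinarith [abs_nonneg a, abs_nonneg b], ?_⟩
  have : ((1 - ε) / 2) • u + ((1 - ε) / 2) • v + ε • z =
      ((1 - ε) / 2 + ε * a) • u + ((1 - ε) / 2 + ε * b) • v + (ε * c) • w := by
    rw [hz]; module
  rw [this]
  refine smul_add_smul_add_smul_mem_convexHull hu hv hw ?_ ?_ (by positivity) ?_
  · nlinarith [abs_nonneg b]
  · nlinarith [abs_nonneg a]
  · linear_combination ε * habc

lemma eq_single_of_mem_stdSimplex {ι : Type*} [Fintype ι] [DecidableEq ι] {y : ι → ℝ}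
    (hy : y ∈ stdSimplex ℝ ι) {i : ι} (hi : 1 ≤ y i) : y = Pi.single i 1 := by
  have hrest : ∑ j ∈ univ.erase i, y j = 0 := by
    linarith [add_sum_erase univ y (mem_univ i), hy.2,
      sum_nonneg fun j (_ : j ∈ univ.erase i) => hy.1 j]
  funext j
  by_cases hji : j = i
  · subst hji
    simp only [Pi.single_eq_same]
    linarith [single_le_sum (fun j _ => hy.1 j) (mem_univ j) (f := y), hy.2]
  · rw [Pi.single_eq_of_ne hji]
    exact (sum_eq_zero_iff_of_nonneg fun j _ => hy.1 j).1 hrest j (mem_erase.2 ⟨hji, mem_univ j⟩)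

lemma cramer_triple_product {R : Type*} [CommRing R] (u v w x : Fin 3 → R) :
    (w ⬝ᵥ u ⨯₃ v) • x = (x ⬝ᵥ v ⨯₃ w) • u + (x ⬝ᵥ w ⨯₃ u) • v + (x ⬝ᵥ u ⨯₃ v) • w := by
  ext i
  fin_cases i <;> simp [cross_apply, dotProduct, Fin.sum_univ_three] <;> ring

lemma exists_eq_smul_add_smul_add_smul {u v w z : ℝ³} (hD : w ⬝ᵥ u ⨯₃ v ≠ 0)
    (hu : ∑ i, u i = 1) (hv : ∑ i, v i = 1) (hw : ∑ i, w i = 1) (hz : ∑ i, z i = 1) :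
    ∃ a b : ℝ, a + b + (z ⬝ᵥ u ⨯₃ v) / (w ⬝ᵥ u ⨯₃ v) = 1 ∧
      z = a • u + b • v + ((z ⬝ᵥ u ⨯₃ v) / (w ⬝ᵥ u ⨯₃ v)) • w := by
  have hcramer := cramer_triple_product u v w z
  have hsum := congrArg (fun x : ℝ³ => ∑ i, x i) hcramer
  simp only [sum_add_distrib, Pi.add_apply, Pi.smul_apply, smul_eq_mul, ← mul_sum, hu, hv, hw,
    hz, mul_one] at hsum
  refine ⟨(z ⬝ᵥ v ⨯₃ w) / (w ⬝ᵥ u ⨯₃ v), (z ⬝ᵥ w ⨯₃ u) / (w ⬝ᵥ u ⨯₃ v), ?_, ?_⟩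
  · rw [← add_div, ← add_div, ← hsum, div_self hD]
  · conv_lhs => rw [← inv_smul_smul₀ hD z, hcramer]
    simp only [smul_add, smul_smul, div_eq_inv_mul]

lemma triple_product_ne_zero {u v w : ℝ³}
    (hind : AffineIndependent ℝ ((↑) : ({u, v, w} : Finset ℝ³) → ℝ³))
    (hu : ∑ i, u i = 1) (hv : ∑ i, v i = 1) (hw : ∑ i, w i = 1)
    (huv : u ≠ v) (huw : u ≠ w) (hvw : v ≠ w) : w ⬝ᵥ u ⨯₃ v ≠ 0 := by
  rw [triple_product_eq_det]
  intro h
  obtain ⟨c, hc, hcM⟩ := exists_vecMul_eq_zero_iff.2 h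
  have hcomb : c 0 • w + c 1 • u + c 2 • v = 0 := by
    rw [← hcM]; ext j; simp [vecMul, dotProduct, Fin.sum_univ_three]
  have hsum : c 0 + c 1 + c 2 = 0 := by
    have := congrArg (fun x : ℝ³ => ∑ j, x j) hcomb
    simp only [sum_add_distrib, Pi.add_apply, Pi.smul_apply, smul_eq_mul, ← mul_sum,
      hu, hv, hw, Pi.zero_apply, sum_const_zero] at this
    linarith
  let a : ℝ³ → ℝ := fun x => if x = u then c 1 else if x = v then c 2 else c 0
  have hzero := hind.eq_zero_of_sum_eq_zero_subtype (w := a)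
    (by simp [a, sum_insert, huv, huw, hvw, Ne.symm huv, Ne.symm huw, Ne.symm hvw]; linarith)
    (by
      simp [a, sum_insert, huv, huw, hvw, Ne.symm huv, Ne.symm huw, Ne.symm hvw]
      rw [← hcomb]
      abel)
  apply hc
  ext j
  fin_cases j
  · simpa [a, Ne.symm huw, Ne.symm hvw] using hzero w (by simp)
  · simpa [a] using hzero u (by simp)
  · simpa [a, Ne.symm huv] using hzero v (by simp)

lemma dotProduct_cross_eq_zero_of_mem_segment {u v x : ℝ³} (hx : x ∈ segment ℝ u v) :
    x ⬝ᵥ u ⨯₃ v = 0 := by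
  obtain ⟨a, b, -, -, -, rfl⟩ := hx
  simp [dot_self_cross, dot_cross_self]

lemma mul_dotProduct_cross_nonneg {u v w x : ℝ³}
    (hx : x ∈ convexHull ℝ ({u, v, w} : Set ℝ³)) :
    0 ≤ (w ⬝ᵥ u ⨯₃ v) * (x ⬝ᵥ u ⨯₃ v) := by
  refine ((w ⬝ᵥ u ⨯₃ v) • (dotProductBilin ℝ ℝ).flip (u ⨯₃ v)).nonneg_of_mem_convexHull ?_ hx
  rintro y (rfl | rfl | rfl)
  · simp [dot_self_cross]
  · simp [dot_cross_self]
  · simpa using mul_self_nonneg _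

lemma dotProduct_cross_of_two_eq_zero {u v : ℝ³} (hu : u 2 = 0) (hv : v 2 = 0)
    (x : ℝ³) : x ⬝ᵥ u ⨯₃ v = x 2 * (u 0 * v 1 - u 1 * v 0) := by
  simp [cross_apply, dotProduct, Fin.sum_univ_three, hu, hv]

noncomputable def bottomEdge : ℝ →ᵃ[ℝ] ℝ³ :=
  AffineMap.lineMap (Pi.single 0 1) (Pi.single 1 1)

@[simp] lemma bottomEdge_apply_one (c : ℝ) : bottomEdge c 1 = c := by
  simp [bottomEdge, AffineMap.lineMap_apply]

lemma eq_bottomEdge {x : ℝ³} (hx : ∑ i, x i = 1) (h2 : x 2 = 0) : x = bottomEdge (x 1) := by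
  rw [Fin.sum_univ_three, h2] at hx
  funext i
  fin_cases i <;> simp [bottomEdge, AffineMap.lineMap_apply, h2]; linarith

lemma mem_segment_of_two_eq_zero {x y z : ℝ³} (hx : ∑ i, x i = 1) (hy : ∑ i, y i = 1)
    (hz : ∑ i, z i = 1) (hx2 : x 2 = 0) (hy2 : y 2 = 0) (hz2 : z 2 = 0)
    (h : z 1 ∈ segment ℝ (x 1) (y 1)) : z ∈ segment ℝ x y := by
  rw [eq_bottomEdge hx hx2, eq_bottomEdge hy hy2, eq_bottomEdge hz hz2, ← image_segment]
  exact Set.mem_image_of_mem _ h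

namespace Triangulation

section General

variable {n : ℕ} {T : Triangulation n}

lemma mem_verts {v : Fin (n + 1) → ℝ} : v ∈ T.verts ↔ ∃ s ∈ T.cells, v ∈ s := by
  simp [verts]

lemma subset_verts {s : Finset (Fin (n + 1) → ℝ)} (hs : s ∈ T.cells) : s ⊆ T.verts :=
  le_sup (f := id) hs

lemma exists_cell_mem_convexHull {x : Fin (n + 1) → ℝ} (hx : x ∈ stdSimplex ℝ (Fin (n + 1))) :
    ∃ s ∈ T.cells, x ∈ convexHull ℝ (s : Set (Fin (n + 1) → ℝ)) := by
  rw [← T.covers] at hx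
  simpa using hx

lemma mem_stdSimplex_of_mem_verts {v : Fin (n + 1) → ℝ} (hv : v ∈ T.verts) :
    v ∈ stdSimplex ℝ (Fin (n + 1)) := by
  obtain ⟨s, hs, hvs⟩ := mem_verts.1 hv
  rw [← T.covers]
  exact Set.mem_biUnion hs (subset_convexHull ℝ _ hvs)

lemma mem_cell_of_mem_convexHull {s : Finset (Fin (n + 1) → ℝ)} (hs : s ∈ T.cells)
    {x : Fin (n + 1) → ℝ} (hx : x ∈ T.verts)
    (hxs : x ∈ convexHull ℝ (s : Set (Fin (n + 1) → ℝ))) : x ∈ s := by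
  obtain ⟨t, ht, hxt⟩ := mem_verts.1 hx
  have : x ∈ convexHull ℝ ((s ∩ t : Finset _) : Set (Fin (n + 1) → ℝ)) := by
    rw [← T.face_to_face s hs t ht]
    exact ⟨hxs, subset_convexHull ℝ _ hxt⟩
  exact (mem_inter.1 ((T.indep t ht).mem_of_mem_convexHull inter_subset_right hxt this)).1

lemma single_mem_verts (i : Fin (n + 1)) : Pi.single i 1 ∈ T.verts := by
  obtain ⟨s, hs, hes⟩ := exists_cell_mem_convexHull (T := T) (single_mem_stdSimplex ℝ i)
  obtain ⟨y, hy, hiy⟩ :=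
    ((LinearMap.proj i).convexOn convex_univ).exists_ge_of_mem_convexHull (Set.subset_univ _) hes
  have hys : y ∈ T.verts := subset_verts hs hy
  rw [eq_single_of_mem_stdSimplex (mem_stdSimplex_of_mem_verts hys) (by simpa using hiy)] at hys
  exact hys

end General

variable {T : Triangulation 2}

lemma sum_eq_one_of_mem_verts {v : ℝ³} (hv : v ∈ T.verts) : ∑ i, v i = 1 :=
  (mem_stdSimplex_of_mem_verts hv).2

lemma eq_triple {s : Finset ℝ³} (hs : s ∈ T.cells) {u v w : ℝ³} (hu : u ∈ s)
    (hv : v ∈ s) (hw : w ∈ s) (huv : u ≠ v) (hwu : w ≠ u) (hwv : w ≠ v) : s = {u, v, w} := by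
  refine (eq_of_subset_of_card_le ?_ ?_).symm
  · simp [insert_subset_iff, hu, hv, hw]
  · rw [T.card_cells s hs, card_insert_of_notMem (by simp [huv, hwu.symm]),
      card_pair hwv.symm]

lemma exists_mem_ne_ne {s : Finset ℝ³} (hs : s ∈ T.cells) (u v : ℝ³) :
    ∃ w ∈ s, w ≠ u ∧ w ≠ v := by
  obtain ⟨w, hw, hwuv⟩ := exists_mem_notMem_of_card_lt_card (s := {u, v}) (t := s)
    (by rw [T.card_cells s hs]; exact (card_le_two).trans_lt (by norm_num))
  exact ⟨w, hw, by simpa [not_or] using hwuv⟩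

lemma dotProduct_cross_ne_zero {s : Finset ℝ³} (hs : s ∈ T.cells) {u v w : ℝ³}
    (hu : u ∈ s) (hv : v ∈ s) (hw : w ∈ s) (huv : u ≠ v) (hwu : w ≠ u) (hwv : w ≠ v) :
    w ⬝ᵥ u ⨯₃ v ≠ 0 := by
  have hind := T.indep s hs
  rw [eq_triple hs hu hv hw huv hwu hwv] at hind
  have hsum := fun x (hx : x ∈ s) => sum_eq_one_of_mem_verts (subset_verts hs hx)
  exact triple_product_ne_zero hind (hsum u hu) (hsum v hv) (hsum w hw) huv hwu.symm hwv.symm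

theorem dotProduct_cross_mul_neg {s t : Finset ℝ³} (hs : s ∈ T.cells) (ht : t ∈ T.cells)
    (hst : s ≠ t) {u v w z : ℝ³} (hu : u ∈ s) (hv : v ∈ s) (hw : w ∈ s) (hut : u ∈ t)
    (hvt : v ∈ t) (hz : z ∈ t) (huv : u ≠ v) (hwu : w ≠ u) (hwv : w ≠ v) (hzu : z ≠ u)
    (hzv : z ≠ v) : (w ⬝ᵥ u ⨯₃ v) * (z ⬝ᵥ u ⨯₃ v) < 0 := by
  have hD := dotProduct_cross_ne_zero hs hu hv hw huv hwu hwv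
  have hE := dotProduct_cross_ne_zero ht hut hvt hz huv hzu hzv
  have hst_sub : s ∩ t ⊆ {u, v} := by
    intro x hx
    obtain ⟨hxs, hxt⟩ := mem_inter.1 hx
    rw [eq_triple hs hu hv hw huv hwu hwv] at hxs
    simp only [mem_insert, mem_singleton] at hxs
    rcases hxs with rfl | rfl | rfl
    · simp
    · simp
    · rw [eq_triple ht hut hvt hz huv hzu hzv] at hxt
      simp only [mem_insert, mem_singleton, hwu, hwv, false_or] at hxt
      exact absurd (by rw [eq_triple hs hu hv hw huv hwu hwv, eq_triple ht hut hvt hz huv hzu hzv,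
        hxt]) hst
  by_contra! hDE
  have hγ : 0 ≤ (z ⬝ᵥ u ⨯₃ v) / (w ⬝ᵥ u ⨯₃ v) := by
    rw [← mul_div_mul_left _ _ hD]
    exact div_nonneg hDE (mul_self_nonneg _)
  have hsum := fun x (hx : x ∈ T.verts) => sum_eq_one_of_mem_verts hx
  obtain ⟨a, b, habc, hz_eq⟩ := exists_eq_smul_add_smul_add_smul hD
    (hsum u (subset_verts hs hu)) (hsum v (subset_verts hs hv)) (hsum w (subset_verts hs hw))
    (hsum z (subset_verts ht hz))
  -- a point of `conv t` near the midpoint of `uv` that also lies in `conv s`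
  obtain ⟨ε, hε, hε1, hps⟩ := exists_smul_add_smul_add_smul_mem_convexHull (A := s)
    hu hv hw hγ habc hz_eq
  have hpt := smul_add_smul_add_smul_mem_convexHull (A := (t : Set ℝ³)) hut hvt hz
    (a := (1 - ε) / 2) (b := (1 - ε) / 2) (by linarith) (by linarith) hε.le (by ring)
  have hp := dotProduct_cross_eq_zero_of_mem_segment
    (x := ((1 - ε) / 2) • u + ((1 - ε) / 2) • v + ε • z) <| by
    rw [← convexHull_pair, ← coe_pair]
    refine convexHull_mono (coe_subset.2 hst_sub) ?_
    rw [← T.face_to_face s hs t ht]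
    exact ⟨hps, hpt⟩
  simp [dot_self_cross, dot_cross_self] at hp
  exact hp.elim hε.ne' hE

lemma card_cells_containing_le_two {u v : ℝ³} (huv : u ≠ v) :
    #{s ∈ T.cells | u ∈ s ∧ v ∈ s} ≤ 2 := by
  by_contra! h
  obtain ⟨s, hs, t, ht, r, hr, hst, hsr, htr⟩ := two_lt_card.1 h
  simp only [mem_filter] at hs ht hr
  obtain ⟨w, hw, hwu, hwv⟩ := exists_mem_ne_ne hs.1 u v
  obtain ⟨z, hz, hzu, hzv⟩ := exists_mem_ne_ne ht.1 u v
  obtain ⟨y, hy, hyu, hyv⟩ := exists_mem_ne_ne hr.1 u v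
  have h1 := dotProduct_cross_mul_neg hs.1 ht.1 hst hs.2.1 hs.2.2 hw ht.2.1 ht.2.2 hz huv hwu hwv
    hzu hzv
  have h2 := dotProduct_cross_mul_neg hs.1 hr.1 hsr hs.2.1 hs.2.2 hw hr.2.1 hr.2.2 hy huv hwu hwv
    hyu hyv
  have h3 := dotProduct_cross_mul_neg ht.1 hr.1 htr ht.2.1 ht.2.2 hz hr.2.1 hr.2.2 hy huv hzu hzv
    hyu hyv
  nlinarith [mul_pos_of_neg_of_neg h1 h2, sq_nonneg ((w ⬝ᵥ u ⨯₃ v) * (z ⬝ᵥ u ⨯₃ v) * (y ⬝ᵥ u ⨯₃ v))]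

lemma card_cells_containing_le_one {u v : ℝ³} (huv : u ≠ v) (hu : u 2 = 0) (hv : v 2 = 0) :
    #{s ∈ T.cells | u ∈ s ∧ v ∈ s} ≤ 1 := by
  refine card_le_one.2 fun s hs t ht => ?_
  by_contra hst
  simp only [mem_filter] at hs ht
  obtain ⟨w, hw, hwu, hwv⟩ := exists_mem_ne_ne hs.1 u v
  obtain ⟨z, hz, hzu, hzv⟩ := exists_mem_ne_ne ht.1 u v
  have h := dotProduct_cross_mul_neg hs.1 ht.1 hst hs.2.1 hs.2.2 hw ht.2.1 ht.2.2 hz huv hwu hwv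
    hzu hzv
  rw [dotProduct_cross_of_two_eq_zero hu hv, dotProduct_cross_of_two_eq_zero hu hv] at h
  have hw2 := (mem_stdSimplex_of_mem_verts (subset_verts hs.1 hw)).1 2
  have hz2 := (mem_stdSimplex_of_mem_verts (subset_verts ht.1 hz)).1 2
  nlinarith [mul_nonneg (mul_nonneg hw2 hz2) (sq_nonneg (u 0 * v 1 - u 1 * v 0))]

open Filter Topology in
lemma exists_cell_ne_midpoint_mem_convexHull {s : Finset ℝ³} (hs : s ∈ T.cells)
    {u v w : ℝ³} (hu : u ∈ s) (hv : v ∈ s) (hw : w ∈ s) (huv : u ≠ v) (hwu : w ≠ u)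
    (hwv : w ≠ v) (hpos : ∀ i, 0 < u i + v i) :
    ∃ t ∈ T.cells, t ≠ s ∧ (1 / 2 : ℝ) • u + (1 / 2 : ℝ) • v ∈ convexHull ℝ (t : Set ℝ³) := by
  set m := (1 / 2 : ℝ) • u + (1 / 2 : ℝ) • v
  set C := ⋃ t ∈ T.cells.erase s, convexHull ℝ (t : Set ℝ³)
  have hC : IsClosed C := isClosed_biUnion_finset fun t _ =>
    (t.finite_toSet.isCompact_convexHull (𝕜 := ℝ)).isClosed
  -- push the midpoint slightly away from `w`: into the simplex, but out of `conv s`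
  set q : ℝ → ℝ³ := fun ε => m + ε • (m - w)
  have hq : Tendsto q (𝓝[>] 0) (𝓝 m) := by
    have : Continuous q := continuous_const.add (continuous_id.smul continuous_const)
    simpa [q] using (this.tendsto 0).mono_left nhdsWithin_le_nhds
  have hqpos : ∀ᶠ ε in 𝓝[>] 0, ∀ i, 0 < q ε i := eventually_all.2 fun i =>
    ((continuous_apply i).continuousAt.tendsto.comp hq).eventually
      (lt_mem_nhds (by simp only [m, Pi.add_apply, Pi.smul_apply, smul_eq_mul]; linarith [hpos i]))
  have hqC : ∀ᶠ ε in 𝓝[>] 0, q ε ∈ C := by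
    filter_upwards [hqpos, self_mem_nhdsWithin] with ε hε hε0
    have hsum := fun x (hx : x ∈ s) => sum_eq_one_of_mem_verts (subset_verts hs hx)
    have hsimplex : q ε ∈ stdSimplex ℝ (Fin 3) := by
      refine ⟨fun i => (hε i).le, ?_⟩
      simp only [q, m, Pi.add_apply, Pi.smul_apply, Pi.sub_apply, smul_eq_mul, sum_add_distrib,
        ← mul_sum, sum_sub_distrib, hsum u hu, hsum v hv, hsum w hw]
      ring
    obtain ⟨t, ht, hqt⟩ := exists_cell_mem_convexHull hsimplex
    refine Set.mem_biUnion (mem_erase.2 ⟨?_, ht⟩) hqt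
    rintro rfl
    rw [eq_triple hs hu hv hw huv hwu hwv, coe_insert, coe_pair] at hqt
    have hside := mul_dotProduct_cross_nonneg hqt
    simp [q, m, dot_self_cross, dot_cross_self] at hside
    nlinarith [mul_pos (Set.mem_Ioi.1 hε0)
      (mul_self_pos.2 (dotProduct_cross_ne_zero hs hu hv hw huv hwu hwv))]
  obtain ⟨t, ht, hmt⟩ := Set.mem_iUnion₂.1 (hC.mem_of_tendsto hq hqC)
  exact ⟨t, (mem_erase.1 ht).2, (mem_erase.1 ht).1, hmt⟩

lemma one_lt_card_cells_containing {s : Finset ℝ³} (hs : s ∈ T.cells) {u v : ℝ³}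
    (hu : u ∈ s) (hv : v ∈ s) (huv : u ≠ v) (hpos : ∀ i, 0 < u i + v i) :
    1 < #{t ∈ T.cells | u ∈ t ∧ v ∈ t} := by
  obtain ⟨w, hw, hwu, hwv⟩ := exists_mem_ne_ne hs u v
  obtain ⟨t, ht, hts, hmt⟩ := exists_cell_ne_midpoint_mem_convexHull hs hu hv hw huv hwu hwv hpos
  have hm : (1 / 2 : ℝ) • u + (1 / 2 : ℝ) • v ∈ convexHull ℝ ((s ∩ t : Finset ℝ³) : Set ℝ³) := by
    rw [← T.face_to_face s hs t ht]
    exact ⟨convex_convexHull ℝ _ (subset_convexHull ℝ _ hu) (subset_convexHull ℝ _ hv)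
      (by norm_num) (by norm_num) (by norm_num), hmt⟩
  -- if `x ∉ t`, the midpoint of `xy` would lie on the edge `yw` of `s`
  have key : ∀ {x y}, x ∈ s → y ∈ s → x ≠ y → w ≠ x → w ≠ y →
      (1 / 2 : ℝ) • x + (1 / 2 : ℝ) • y ∈ convexHull ℝ ((s ∩ t : Finset ℝ³) : Set ℝ³) → x ∈ t := by
    intro x y hx hy hxy hwx hwy hmxy
    by_contra hxt
    have hsub : s ∩ t ⊆ {y, w} := by
      intro z hz
      obtain ⟨hzs, hzt⟩ := mem_inter.1 hz
      rw [eq_triple hs hx hy hw hxy hwx hwy] at hzs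
      simp only [mem_insert, mem_singleton] at hzs ⊢
      rcases hzs with rfl | h | h
      · exact absurd hzt hxt
      · exact Or.inl h
      · exact Or.inr h
    have h0 := dotProduct_cross_eq_zero_of_mem_segment
      (x := (1 / 2 : ℝ) • x + (1 / 2 : ℝ) • y) <| by
      rw [← convexHull_pair, ← coe_pair]
      exact convexHull_mono (coe_subset.2 hsub) hmxy
    simp [dot_self_cross] at h0
    exact dotProduct_cross_ne_zero hs hy hw hx hwy.symm hxy hwx.symm h0
  exact one_lt_card.2 ⟨s, mem_filter.2 ⟨hs, hu, hv⟩, t, mem_filter.2 ⟨ht, key hu hv huv hwu hwv hm,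
    key hv hu huv.symm hwv hwu (by rwa [add_comm])⟩, hts.symm⟩

lemma bottomEdge_apply_one_of_mem_verts {x : ℝ³} (hx : x ∈ T.verts) (h2 : x 2 = 0) :
    bottomEdge (x 1) = x :=
  (eq_bottomEdge (sum_eq_one_of_mem_verts hx) h2).symm

noncomputable def bottomCoords (T : Triangulation 2) : Finset ℝ :=
  {v ∈ T.verts | v 2 = 0}.image (· 1)

lemma notMem_uIoo_of_mem_cell {s : Finset ℝ³} (hs : s ∈ T.cells) {a b c : ℝ³}
    (ha : a ∈ s) (hb : b ∈ s) (hc : c ∈ T.verts) (ha2 : a 2 = 0) (hb2 : b 2 = 0)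
    (hc2 : c 2 = 0) : c 1 ∉ Set.uIoo (a 1) (b 1) := by
  intro h
  have hseg : c ∈ segment ℝ a b := mem_segment_of_two_eq_zero
    (sum_eq_one_of_mem_verts (subset_verts hs ha)) (sum_eq_one_of_mem_verts (subset_verts hs hb))
    (sum_eq_one_of_mem_verts hc) ha2 hb2 hc2
    (segment_eq_uIcc (a 1) (b 1) ▸ Set.uIoo_subset_uIcc_self h)
  have hcs : c ∈ s := mem_cell_of_mem_convexHull hs hc (segment_subset_convexHull ha hb hseg)
  have : c ∈ ({a, b} : Finset _) := (T.indep s hs).mem_of_mem_convexHull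
    (by simp [insert_subset_iff, ha, hb]) hcs (by rwa [coe_pair, convexHull_pair])
  simp only [mem_insert, mem_singleton] at this
  rcases this with rfl | rfl <;> simp at h

lemma exists_cell_of_forall_notMem_uIoo {a b : ℝ³} (ha : a ∈ T.verts) (hb : b ∈ T.verts)
    (ha2 : a 2 = 0) (hb2 : b 2 = 0)
    (hgap : ∀ c ∈ T.verts, c 2 = 0 → c 1 ∉ Set.uIoo (a 1) (b 1)) :
    ∃ t ∈ T.cells, a ∈ t ∧ b ∈ t := by
  wlog hab : a 1 ≤ b 1 generalizing a b
  · obtain ⟨t, ht, hbt, hat⟩ :=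
      this hb ha hb2 ha2 (by simpa only [Set.uIoo_comm] using hgap) (le_of_not_ge hab)
    exact ⟨t, ht, hat, hbt⟩
  have hmem := fun x (hx : x ∈ T.verts) => mem_stdSimplex_of_mem_verts hx
  set m := (1 / 2 : ℝ) • a + (1 / 2 : ℝ) • b
  have hm : m ∈ stdSimplex ℝ (Fin 3) :=
    convex_stdSimplex ℝ _ (hmem a ha) (hmem b hb) (by norm_num) (by norm_num) (by norm_num)
  obtain ⟨t, ht, hmt⟩ := exists_cell_mem_convexHull hm
  -- the vertices of `t` on the bottom edge already surround `m`
  have hmB := (LinearMap.proj 2).mem_convexHull_filter_eq_zero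
    (fun y hy => (hmem y (subset_verts ht hy)).1 2) hmt (by simp [m, ha2, hb2])
  obtain ⟨p, hp, hpm⟩ := ((LinearMap.proj (R := ℝ) (φ := fun _ : Fin 3 => ℝ) 1).concaveOn
    convex_univ).exists_le_of_mem_convexHull (Set.subset_univ _) hmB
  obtain ⟨q, hq, hmq⟩ := ((LinearMap.proj (R := ℝ) (φ := fun _ : Fin 3 => ℝ) 1).convexOn
    convex_univ).exists_ge_of_mem_convexHull (Set.subset_univ _) hmB
  simp only [Set.mem_ofPred_eq, LinearMap.coe_proj, Function.eval, m, Pi.add_apply,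
    Pi.smul_apply, smul_eq_mul] at hp hq hpm hmq
  have hpa : p 1 ≤ a 1 := by
    by_contra! h
    exact hgap p (subset_verts ht hp.1) hp.2 (Set.mem_uIoo_of_lt h (by linarith))
  have hqb : b 1 ≤ q 1 := by
    by_contra! h
    exact hgap q (subset_verts ht hq.1) hq.2 (Set.mem_uIoo_of_lt (by linarith) h)
  have hbetween : ∀ x ∈ T.verts, x 2 = 0 → p 1 ≤ x 1 → x 1 ≤ q 1 → x ∈ t :=
    fun x hx hx2 hpx hxq => mem_cell_of_mem_convexHull ht hx <|
      segment_subset_convexHull hp.1 hq.1 <| mem_segment_of_two_eq_zero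
        (hmem p (subset_verts ht hp.1)).2 (hmem q (subset_verts ht hq.1)).2 (hmem x hx).2
        hp.2 hq.2 hx2 (by rw [segment_eq_Icc (hpx.trans hxq)]; exact ⟨hpx, hxq⟩)
  exact ⟨t, ht, hbetween a ha ha2 hpa (hab.trans hqb), hbetween b hb hb2 (hpa.trans hab) hqb⟩

lemma adjacentIn_bottomCoords_iff {a b : ℝ³} (ha : a ∈ T.verts) (hb : b ∈ T.verts)
    (ha2 : a 2 = 0) (hb2 : b 2 = 0) :
    AdjacentIn T.bottomCoords (a 1) (b 1) ↔ a ≠ b ∧ ∃ s ∈ T.cells, a ∈ s ∧ b ∈ s := by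
  constructor
  · rintro ⟨hne, hgap⟩
    refine ⟨fun h => hne (congrArg (· 1) h), exists_cell_of_forall_notMem_uIoo ha hb ha2 hb2
      fun c hc hc2 => hgap _ (mem_image_of_mem _ (mem_filter.2 ⟨hc, hc2⟩))⟩
  · rintro ⟨hne, s, hs, has, hbs⟩
    refine ⟨fun h => hne ?_, fun z hz => ?_⟩
    · rw [← bottomEdge_apply_one_of_mem_verts ha ha2, ← bottomEdge_apply_one_of_mem_verts hb hb2, h]
    obtain ⟨c, hc, rfl⟩ := mem_image.1 hz
    exact notMem_uIoo_of_mem_cell hs has hbs (mem_filter.1 hc).1 ha2 hb2 (mem_filter.1 hc).2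

variable {L : ℝ³ → Fin 3}

noncomputable def doors (T : Triangulation 2) (L : ℝ³ → Fin 3) :
    Finset (ℝ³ × ℝ³) :=
  {d ∈ T.verts ×ˢ T.verts | L d.1 = 0 ∧ L d.2 = 1 ∧ ∃ s ∈ T.cells, d.1 ∈ s ∧ d.2 ∈ s}

lemma label_ne_two (hL : IsSpernerLabelling T L) {v : ℝ³} (hv : v ∈ T.verts)
    (h2 : v 2 = 0) : L v ≠ 2 := fun h => by
  simpa [h, h2] using hL v hv

lemma label_single (hL : IsSpernerLabelling T L) (i : Fin 3) : L (Pi.single i 1) = i := by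
  by_contra h
  simpa [Pi.single_apply, h] using hL _ (single_mem_verts i)

lemma card_doors_inter_cell {s : Finset ℝ³} (hs : s ∈ T.cells) :
    #{d ∈ T.doors L | d.1 ∈ s ∧ d.2 ∈ s} = #{x ∈ s | L x = 0} * #{x ∈ s | L x = 1} := by
  rw [← card_product, ← filter_product]
  congr 1
  ext d
  simp only [doors, mem_filter, mem_product]
  constructor
  · rintro ⟨⟨-, h0, h1, -⟩, hd1, hd2⟩
    exact ⟨⟨hd1, hd2⟩, h0, h1⟩
  · rintro ⟨⟨hd1, hd2⟩, h0, h1⟩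
    exact ⟨⟨⟨subset_verts hs hd1, subset_verts hs hd2⟩, h0, h1, s, hs, hd1, hd2⟩, hd1, hd2⟩

lemma card_cells_containing_door_mod_two (hL : IsSpernerLabelling T L)
    {d : ℝ³ × ℝ³} (hd : d ∈ T.doors L) :
    #{s ∈ T.cells | d.1 ∈ s ∧ d.2 ∈ s} % 2 = if d.1 2 = 0 ∧ d.2 2 = 0 then 1 else 0 := by
  obtain ⟨⟨ha, hb⟩, hLa, hLb, s, hs, has, hbs⟩ := by
    simpa only [doors, mem_filter, mem_product] using hd
  have hab : d.1 ≠ d.2 := fun h => by simp [h, hLb] at hLa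
  have hpos : 0 < #{s ∈ T.cells | d.1 ∈ s ∧ d.2 ∈ s} := card_pos.2 ⟨s, mem_filter.2 ⟨hs, has, hbs⟩⟩
  split_ifs with hbot
  · have := card_cells_containing_le_one (T := T) hab hbot.1 hbot.2
    omega
  · have ha0 : 0 < d.1 0 := by simpa [hLa] using hL _ ha
    have hb1 : 0 < d.2 1 := by simpa [hLb] using hL _ hb
    have hna := (mem_stdSimplex_of_mem_verts ha).1
    have hnb := (mem_stdSimplex_of_mem_verts hb).1
    have hmid : ∀ i, 0 < d.1 i + d.2 i := by
      intro i
      rcases (by decide : ∀ j : Fin 3, j = 0 ∨ j = 1 ∨ j = 2) i with rfl | rfl | rfl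
      · linarith [hnb 0]
      · linarith [hna 1]
      · by_contra! h
        exact hbot ⟨by linarith [hna 2, hnb 2], by linarith [hna 2, hnb 2]⟩
    have := one_lt_card_cells_containing hs has hbs hab hmid
    have := card_cells_containing_le_two (T := T) hab
    omega

lemma single_apply_one_mem_bottomCoords {i : Fin 3} (hi : i ≠ 2) :
    (Pi.single i 1 : ℝ³) 1 ∈ T.bottomCoords :=
  mem_image_of_mem _ (mem_filter.2 ⟨single_mem_verts i, by simp [hi.symm]⟩)

lemma mem_Icc_of_mem_bottomCoords {c : ℝ} (hc : c ∈ T.bottomCoords) : c ∈ Set.Icc 0 1 := by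
  obtain ⟨v, hv, rfl⟩ := mem_image.1 hc
  exact mem_Icc_of_mem_stdSimplex (mem_stdSimplex_of_mem_verts (mem_filter.1 hv).1) 1

lemma min'_bottomCoords (h : T.bottomCoords.Nonempty) : T.bottomCoords.min' h = 0 := by
  have h0 : (0 : ℝ) ∈ T.bottomCoords := by
    simpa using single_apply_one_mem_bottomCoords (T := T) (i := 0) (by decide)
  exact le_antisymm (min'_le _ _ h0) (le_min' _ _ _ fun _ hc => (mem_Icc_of_mem_bottomCoords hc).1)

lemma max'_bottomCoords (h : T.bottomCoords.Nonempty) : T.bottomCoords.max' h = 1 := by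
  have h1 : (1 : ℝ) ∈ T.bottomCoords := by
    simpa using single_apply_one_mem_bottomCoords (T := T) (i := 1) (by decide)
  exact le_antisymm (max'_le _ _ _ fun _ hc => (mem_Icc_of_mem_bottomCoords hc).2) (le_max' _ _ h1)

open scoped Classical in
lemma card_bottom_doors (hL : IsSpernerLabelling T L) :
    #{d ∈ T.doors L | d.1 2 = 0 ∧ d.2 2 = 0} = #{q ∈ T.bottomCoords ×ˢ T.bottomCoords |
      AdjacentIn T.bottomCoords q.1 q.2 ∧ L (bottomEdge q.1) = 0 ∧ ¬ L (bottomEdge q.2) = 0} := by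
  have hbottom := fun x (hx : x ∈ T.verts) => bottomEdge_apply_one_of_mem_verts hx
  refine card_nbij' (fun d => (d.1 1, d.2 1)) (fun c => (bottomEdge c.1, bottomEdge c.2))
    ?_ ?_ ?_ ?_
  · rintro ⟨a, b⟩ hd
    simp only [mem_coe, doors, mem_filter, mem_product] at hd
    obtain ⟨⟨⟨ha, hb⟩, hLa, hLb, hab⟩, ha2, hb2⟩ := hd
    simp only [mem_coe, mem_filter, mem_product, hbottom a ha ha2, hbottom b hb hb2, hLa, hLb]
    refine ⟨⟨mem_image_of_mem _ (mem_filter.2 ⟨ha, ha2⟩),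
      mem_image_of_mem _ (mem_filter.2 ⟨hb, hb2⟩)⟩,
      (adjacentIn_bottomCoords_iff ha hb ha2 hb2).2 ⟨fun h => by simp [h, hLb] at hLa, hab⟩,
      trivial, by decide⟩
  · rintro ⟨x, y⟩ hc
    simp only [mem_coe, mem_filter, mem_product] at hc
    obtain ⟨⟨hx, hy⟩, hadj, hLx, hLy⟩ := hc
    obtain ⟨a, ha, rfl⟩ := mem_image.1 hx
    obtain ⟨b, hb, rfl⟩ := mem_image.1 hy
    rw [mem_filter] at ha hb
    simp only [hbottom a ha.1 ha.2, hbottom b hb.1 hb.2] at hLx hLy ⊢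
    have hLb : L b = 1 := by
      have := label_ne_two hL hb.1 hb.2
      revert hLy this
      generalize L b = j
      decide +revert
    exact mem_filter.2 ⟨mem_filter.2 ⟨mem_product.2 ⟨ha.1, hb.1⟩, hLx, hLb,
      ((adjacentIn_bottomCoords_iff ha.1 hb.1 ha.2 hb.2).1 hadj).2⟩, ha.2, hb.2⟩
  · rintro ⟨a, b⟩ hd
    simp only [mem_coe, doors, mem_filter, mem_product] at hd
    obtain ⟨⟨⟨ha, hb⟩, -⟩, ha2, hb2⟩ := hd
    simp [hbottom a ha ha2, hbottom b hb hb2]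
  · rintro ⟨x, y⟩ -
    simp

theorem odd_card_bottom_doors (hL : IsSpernerLabelling T L) :
    Odd #{d ∈ T.doors L | d.1 2 = 0 ∧ d.2 2 = 0} := by
  have hne : T.bottomCoords.Nonempty := ⟨_, single_apply_one_mem_bottomCoords (i := 0) (by decide)⟩
  rw [card_bottom_doors hL]
  convert (odd_card_adjacentIn_iff _ hne (fun c => L (bottomEdge c) = 0)).2 ?_
  rw [min'_bottomCoords, max'_bottomCoords]
  simp [bottomEdge, label_single hL]

end Triangulation

/-- Two-dimensional Sperner lemma: some small triangle carries all three labels. -/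
theorem sperner_two_dim (T : Triangulation 2) (L : (Fin 3 → ℝ) → Fin 3)
    (hL : IsSpernerLabelling T L) :
    ∃ s ∈ T.cells, s.image L = (Finset.univ : Finset (Fin 3)) := by
  by_contra! hno
  have hcells : Even (∑ s ∈ T.cells, #{d ∈ T.doors L | d.1 ∈ s ∧ d.2 ∈ s}) :=
    even_sum _ fun s hs => T.card_doors_inter_cell (L := L) hs ▸
      even_card_filter_mul_card_filter (by rw [T.card_cells s hs]; decide) L (hno s hs)
  have hdoors : (∑ d ∈ T.doors L, #{s ∈ T.cells | d.1 ∈ s ∧ d.2 ∈ s}) % 2 = 1 := by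
    rw [sum_nat_mod, sum_congr rfl fun d hd => T.card_cells_containing_door_mod_two hL hd,
      ← card_filter, Nat.odd_iff.1 (T.odd_card_bottom_doors hL)]
  have hdouble := sum_card_bipartiteAbove_eq_sum_card_bipartiteBelow (s := T.cells)
    (t := T.doors L) (r := fun s d => d.1 ∈ s ∧ d.2 ∈ s)
  simp only [bipartiteAbove, bipartiteBelow] at hdouble
  rw [hdouble] at hcells
  exact Nat.not_even_iff_odd.2 (Nat.odd_iff.2 hdoors) hcells
end

section
/- Sperner's lemma implies the Knaster–Kuratowski–Mazurkiewicz lemma: if C_1, ..., C_{n+1} are closed subsets of the standard n-simplex such that every face spanned by vertices {v_i : i ∈ I} is contained in ∪_{i∈I} C_i, then ∩_{i=1}^{n+1} C_i is nonempty. -/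
open Set Function

section Barycentric

variable {E ι : Type*} [AddCommGroup E] [Module ℝ E] [DecidableEq ι]
  {A : E →ᵃ[ℝ] ι → ℝ} {w : ι → E}

theorem affineIndependent_of_map_eq_single (hw : ∀ j, A (w j) = Pi.single j 1) :
    AffineIndependent ℝ w := by
  refine AffineIndependent.of_comp A ?_
  rw [show A ∘ w = fun j => Pi.single j 1 from funext hw]
  exact (Pi.linearIndependent_single_one ι ℝ).affineIndependent

variable [Fintype ι]

theorem image_convexHull_eq_stdSimplex (hw : ∀ j, A (w j) = Pi.single j 1) :
    A '' convexHull ℝ (range w) = stdSimplex ℝ ι := by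
  rw [AffineMap.image_convexHull, ← range_comp, ← convexHull_rangle_single_eq_stdSimplex,
    show A ∘ w = fun j => Pi.single j 1 from funext hw]

theorem convexHull_eq_preimage_stdSimplex (hA : Injective A)
    (hw : ∀ j, A (w j) = Pi.single j 1) : convexHull ℝ (range w) = A ⁻¹' stdSimplex ℝ ι := by
  rw [← image_convexHull_eq_stdSimplex hw, preimage_image_eq _ hA]

theorem sum_smul_eq_self (hA : Injective A) (hw : ∀ j, A (w j) = Pi.single j 1) {y : E}
    (hy : ∑ j, A y j = 1) : ∑ j, A y j • w j = y := by
  apply hA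
  rw [← Finset.affineCombination_eq_linear_combination _ _ _ hy,
    Finset.map_affineCombination _ _ _ hy, Finset.affineCombination_eq_linear_combination _ _ _ hy]
  simpa [hw] using (pi_eq_sum_univ' (A y)).symm

theorem mem_convexHull_image_support (hA : Injective A) (hw : ∀ j, A (w j) = Pi.single j 1)
    {y : E} (hy : A y ∈ stdSimplex ℝ ι) : y ∈ convexHull ℝ (w '' {j | A y j ≠ 0}) := by
  classical
  have hpos : 0 < ∑ j ∈ {j | A y j ≠ 0}, A y j := by
    rw [Finset.sum_filter_ne_zero, hy.2]
    exact one_pos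
  have := Finset.centerMass_mem_convexHull (s := w '' {j | A y j ≠ 0}) _ (fun j _ => hy.1 j) hpos
    fun j hj => mem_image_of_mem w (Finset.mem_filter.1 hj).2
  rwa [Finset.centerMass_filter_ne_zero, Finset.centerMass_eq_of_sum_1 _ _ hy.2,
    sum_smul_eq_self hA hw hy.2] at this

end Barycentric

theorem convexHull_image_inter_of_injective {E F : Type*} [AddCommGroup E] [Module ℝ E]
    [AddCommGroup F] [Module ℝ F] {f : E →ᵃ[ℝ] F} (hf : Injective f) {s t : Set E}
    (h : convexHull ℝ s ∩ convexHull ℝ t = convexHull ℝ (s ∩ t)) :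
    convexHull ℝ (f '' s) ∩ convexHull ℝ (f '' t) = convexHull ℝ (f '' s ∩ f '' t) := by
  rw [← image_inter hf, ← AffineMap.image_convexHull, ← AffineMap.image_convexHull,
    ← AffineMap.image_convexHull, ← image_inter hf, h]

namespace OrderSimplex

variable {n : ℕ}

/-- `chain j f` is the `j`-th term of the sequence `1, f 0, …, f (n - 1), 0, 0, …`. -/
noncomputable def chain (j : ℕ) : (Fin n → ℝ) →ᵃ[ℝ] ℝ :=
  if h₀ : j = 0 then AffineMap.const ℝ _ 1
  else if h : j ≤ n then (LinearMap.proj (R := ℝ) (φ := fun _ => ℝ) ⟨j - 1, by omega⟩).toAffineMap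
  else AffineMap.const ℝ _ 0

@[simp] theorem chain_zero (f : Fin n → ℝ) : chain 0 f = 1 := by simp [chain]

@[simp] theorem chain_succ (f : Fin n → ℝ) (m : Fin n) : chain (m + 1) f = f m := by
  simp [chain, Nat.succ_le_of_lt m.isLt]

theorem chain_succ' (f : Fin n → ℝ) (j : ℕ) :
    chain (j + 1) f = if h : j < n then f ⟨j, h⟩ else 0 := by
  split_ifs with h
  · exact chain_succ f ⟨j, h⟩
  · simp [chain, show ¬ j + 1 ≤ n by omega]

theorem chain_of_lt (f : Fin n → ℝ) {j : ℕ} (h : n < j) : chain j f = 0 := by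
  simp [chain, show j ≠ 0 by omega, show ¬ j ≤ n by omega]

/-- Barycentric coordinates with respect to the vertices `vertex j` of the order simplex
`{f | 1 ≥ f 0 ≥ ⋯ ≥ f (n - 1) ≥ 0}`. -/
noncomputable def coord : (Fin n → ℝ) →ᵃ[ℝ] Fin (n + 1) → ℝ :=
  AffineMap.pi fun i => chain i - chain (i + 1)

theorem coord_apply (f : Fin n → ℝ) (i : Fin (n + 1)) :
    coord f i = chain i f - chain (i + 1) f := rfl

theorem sum_coord (f : Fin n → ℝ) : ∑ i, coord f i = 1 := by
  simp only [coord_apply]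
  rw [Fin.sum_univ_eq_sum_range (fun j => chain j f - chain (j + 1) f), Finset.sum_range_sub',
    chain_zero, chain_of_lt f n.lt_succ_self, sub_zero]

theorem coord_mem_stdSimplex_iff_antitone {f : Fin n → ℝ} :
    coord f ∈ stdSimplex ℝ (Fin (n + 1)) ↔ Antitone fun j => chain j f := by
  refine ⟨fun h => antitone_nat_of_succ_le fun j => ?_, fun h => ⟨fun i => ?_, sum_coord f⟩⟩
  · rcases lt_or_ge n j with hj | hj
    · rw [chain_of_lt f hj, chain_of_lt f (by omega)]
    · simpa [coord_apply, sub_nonneg] using h.1 ⟨j, by omega⟩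
  · simpa [coord_apply, sub_nonneg] using h (Nat.le_succ i)

theorem antitone_chain_iff {f : Fin n → ℝ} :
    (Antitone fun j => chain j f) ↔ Antitone f ∧ ∀ i, 0 ≤ f i ∧ f i ≤ 1 := by
  constructor
  · intro h
    refine ⟨fun a b hab => ?_, fun i => ⟨?_, ?_⟩⟩
    · simpa using h (show (a : ℕ) + 1 ≤ b + 1 by simp [hab])
    · simpa [chain_of_lt f n.lt_succ_self] using h (show (i : ℕ) + 1 ≤ n + 1 by omega)
    · simpa using h (Nat.zero_le ((i : ℕ) + 1))
  · rintro ⟨hf, hbd⟩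
    refine antitone_nat_of_succ_le fun j => ?_
    rcases j with _ | j
    · rw [chain_succ', chain_zero]
      split_ifs
      exacts [(hbd _).2, zero_le_one]
    · rw [chain_succ', chain_succ']
      split_ifs
      · exact hf (Fin.mk_le_mk.2 j.le_succ)
      · omega
      · exact (hbd _).1
      · rfl

theorem coord_mem_stdSimplex_iff {f : Fin n → ℝ} :
    coord f ∈ stdSimplex ℝ (Fin (n + 1)) ↔ Antitone f ∧ ∀ i, 0 ≤ f i ∧ f i ≤ 1 :=
  coord_mem_stdSimplex_iff_antitone.trans antitone_chain_iff

theorem coord_injective : Injective (coord : (Fin n → ℝ) → Fin (n + 1) → ℝ) := by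
  intro f g h
  have hchain : ∀ j, chain j f = chain j g := by
    intro j
    induction j with
    | zero => simp
    | succ j ih =>
      rcases lt_or_ge n j with hj | hj
      · rw [chain_of_lt f (by omega), chain_of_lt g (by omega)]
      · have := congrFun h ⟨j, by omega⟩
        simp only [coord_apply] at this
        linarith
  funext m
  simpa using hchain (m + 1)

def vertex (j : Fin (n + 1)) : Fin n → ℝ := fun m => if (m : ℕ) < j then 1 else 0

theorem chain_vertex (j : Fin (n + 1)) (m : ℕ) :
    chain m (vertex j) = if m ≤ j then 1 else 0 := by
  rcases m with _ | m
  · simp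
  · rw [chain_succ']
    split_ifs <;> simp_all [vertex]; omega

theorem coord_vertex (j : Fin (n + 1)) : coord (vertex j) = Pi.single j 1 := by
  funext i
  rw [coord_apply, chain_vertex, chain_vertex, Pi.single_apply]
  split_ifs <;> simp [Fin.ext_iff] at * <;> omega

theorem exists_eq_vertex {b : Fin n → ℝ} (hb : Antitone b) (h01 : ∀ m, b m = 0 ∨ b m = 1) :
    ∃ j, b = vertex j := by
  classical
  set B := Finset.univ.filter fun m => b m = 1
  have hlt : ∀ m, b m = 1 ↔ (m : ℕ) < B.card := by
    intro m
    constructor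
    · intro hm
      have : Finset.Iic m ⊆ B := fun q hq => by
        have := hb (Finset.mem_Iic.1 hq)
        rcases h01 q with h | h <;> simp_all [B]
        linarith
      simpa using Finset.card_le_card this
    · intro hm
      by_contra hm'
      have : B ⊆ Finset.Iio m := fun q hq => by
        by_contra hq'
        have := hb (not_lt.1 (by simpa using hq'))
        rcases h01 m with h | h <;> simp_all [B]
        linarith
      simpa using (Finset.card_le_card this).trans_lt' hm
  refine ⟨⟨B.card, Nat.lt_succ_of_le ((Finset.card_le_univ B).trans_eq (Fintype.card_fin n))⟩, ?_⟩
  funext m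
  simp only [vertex, ← hlt]
  rcases h01 m with h | h <;> simp [h]

theorem dist_chain_le (j : ℕ) (f g : Fin n → ℝ) : dist (chain j f) (chain j g) ≤ dist f g := by
  rcases j with _ | j
  · simp
  · simp only [chain_succ']
    split_ifs
    exacts [dist_le_pi_dist f g _, by simp]

theorem dist_coord_le (f g : Fin n → ℝ) : dist (coord f) (coord g) ≤ 2 * dist f g := by
  refine (dist_pi_le_iff (by positivity)).2 fun i => ?_
  calc dist (coord f i) (coord g i)
      ≤ dist (chain i f) (chain i g) + dist (chain (i + 1) f) (chain (i + 1) g) := by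
        simp only [coord_apply, Real.dist_eq]
        rw [show ∀ a b c d : ℝ, a - b - (c - d) = (a - c) - (b - d) by intros; ring]
        exact abs_sub _ _
    _ ≤ 2 * dist f g := by linarith [dist_chain_le i f g, dist_chain_le (i + 1) f g]

noncomputable def scaledCoord (k : ℕ) : (Fin n → ℝ) →ᵃ[ℝ] Fin (n + 1) → ℝ :=
  coord.comp (AffineMap.homothety 0 (k : ℝ)⁻¹)

variable {k : ℕ}

theorem scaledCoord_apply (u : Fin n → ℝ) : scaledCoord k u = coord ((k : ℝ)⁻¹ • u) := by
  simp [scaledCoord, AffineMap.homothety_apply]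

theorem scaledCoord_injective (hk : k ≠ 0) : Injective (scaledCoord (n := n) k) := by
  intro u v h
  rw [scaledCoord_apply, scaledCoord_apply] at h
  exact smul_right_injective _ (inv_ne_zero (Nat.cast_ne_zero.2 hk)) (coord_injective h)

theorem scaledCoord_mem_stdSimplex_iff (hk : 0 < k) {u : Fin n → ℝ} :
    scaledCoord k u ∈ stdSimplex ℝ (Fin (n + 1)) ↔ Antitone u ∧ ∀ i, 0 ≤ u i ∧ u i ≤ k := by
  have hk' : (0 : ℝ) < k := Nat.cast_pos.2 hk
  rw [scaledCoord_apply, coord_mem_stdSimplex_iff]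
  refine and_congr ⟨fun h a b hab => ?_, fun h a b hab => ?_⟩ (forall_congr' fun i => ?_)
  · simpa [hk'.ne', inv_pos.2 hk'] using h hab
  · simpa [inv_pos.2 hk'] using h hab
  · simp [inv_mul_le_iff₀ hk', mul_nonneg_iff_of_pos_left (inv_pos.2 hk')]

theorem stdSimplex_subset_range_scaledCoord (hk : k ≠ 0) :
    stdSimplex ℝ (Fin (n + 1)) ⊆ range (scaledCoord k) := by
  have hw : ∀ j, scaledCoord k ((k : ℝ) • vertex (n := n) j) = Pi.single j 1 := fun j => by
    rw [scaledCoord_apply, inv_smul_smul₀ (Nat.cast_ne_zero.2 hk), coord_vertex]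
  rw [← image_convexHull_eq_stdSimplex hw]
  exact image_subset_range _ _

theorem dist_scaledCoord_le (u v : Fin n → ℝ) :
    dist (scaledCoord k u) (scaledCoord k v) ≤ 2 / k * dist u v := by
  rw [scaledCoord_apply, scaledCoord_apply]
  refine (dist_coord_le _ _).trans_eq ?_
  rw [dist_smul₀, Real.norm_eq_abs, abs_inv, Nat.abs_cast]
  ring

end OrderSimplex

namespace Kuhn

open OrderSimplex (chain chain_of_lt scaledCoord scaledCoord_injective
  scaledCoord_mem_stdSimplex_iff dist_scaledCoord_le stdSimplex_subset_range_scaledCoord)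

variable {n : ℕ}

/-- The vertices `z + e_{σ 0} + ⋯ + e_{σ (j - 1)}` of the Kuhn simplex with base point `z` and
permutation `σ`. -/
def vertex (z : Fin n → ℤ) (σ : Equiv.Perm (Fin n)) (j : Fin (n + 1)) : Fin n → ℝ :=
  fun i => z i + OrderSimplex.vertex j (σ.symm i)

noncomputable def coord (z : Fin n → ℤ) (σ : Equiv.Perm (Fin n)) :
    (Fin n → ℝ) →ᵃ[ℝ] Fin (n + 1) → ℝ :=
  OrderSimplex.coord.comp ((LinearMap.funLeft ℝ ℝ σ).toAffineMap.comp
    (AffineMap.id ℝ _ - AffineMap.const ℝ _ fun i => (z i : ℝ)))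

section

variable (z : Fin n → ℤ) (σ : Equiv.Perm (Fin n))

theorem coord_apply (y : Fin n → ℝ) :
    coord z σ y = OrderSimplex.coord fun m => y (σ m) - z (σ m) := rfl

theorem coord_injective : Injective (coord z σ) := by
  intro y y' h
  funext i
  simpa using congrFun (OrderSimplex.coord_injective h) (σ.symm i)

theorem coord_vertex (j : Fin (n + 1)) : coord z σ (vertex z σ j) = Pi.single j 1 := by
  simp [coord_apply, vertex, OrderSimplex.coord_vertex]

theorem affineIndependent_vertex : AffineIndependent ℝ (vertex z σ) :=
  affineIndependent_of_map_eq_single (coord_vertex z σ)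

theorem convexHull_range_vertex :
    convexHull ℝ (range (vertex z σ)) = coord z σ ⁻¹' stdSimplex ℝ (Fin (n + 1)) :=
  convexHull_eq_preimage_stdSimplex (coord_injective z σ) (coord_vertex z σ)

theorem dist_vertex_le (j j' : Fin (n + 1)) : dist (vertex z σ j) (vertex z σ j') ≤ 1 := by
  refine (dist_pi_le_iff zero_le_one).2 fun i => ?_
  simp only [vertex, OrderSimplex.vertex, Real.dist_eq]
  split_ifs <;> norm_num

end

/-- For `y` in a Kuhn simplex these lattice points are exactly the vertices of the smallest face
containing `y`, although the definition makes no reference to the simplex. -/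
def IsCarrierVertex (y w : Fin n → ℝ) : Prop :=
  (∀ i, ∃ a : ℤ, w i = a) ∧ (∀ i, |y i - w i| < 1) ∧ ∀ i i', (y i - w i) - (y i' - w i') < 1

variable {z : Fin n → ℤ} {σ : Equiv.Perm (Fin n)}

theorem isCarrierVertex_vertex {y : Fin n → ℝ} (hy : coord z σ y ∈ stdSimplex ℝ (Fin (n + 1)))
    {j : Fin (n + 1)} (hj : coord z σ y j ≠ 0) : IsCarrierVertex y (vertex z σ j) := by
  set c : ℕ → ℝ := fun m => chain m fun m => y (σ m) - z (σ m)
  have hc : Antitone c := OrderSimplex.coord_mem_stdSimplex_iff_antitone.1 hy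
  have hgap : c (j + 1) < c j := (hc (Nat.le_succ j)).lt_of_ne fun h => hj (by
    rw [coord_apply, OrderSimplex.coord_apply]; exact sub_eq_zero.2 h.symm)
  have hlow : 0 ≤ c (j + 1) := by
    simpa [c, chain_of_lt _ (Nat.lt_succ_self n)] using hc (show (j : ℕ) + 1 ≤ n + 1 by omega)
  have hhigh : c j ≤ 1 := by simpa [c] using hc (Nat.zero_le j)
  have hd : ∀ i, c j - 1 ≤ y i - vertex z σ j i ∧ y i - vertex z σ j i ≤ c (j + 1) := by
    intro i
    have hci : c (σ.symm i + 1) = y i - z i := by simp [c]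
    have h0 : c (σ.symm i + 1) ≤ 1 := by simpa [c] using hc (Nat.zero_le (σ.symm i + 1))
    simp only [vertex, OrderSimplex.vertex]
    split_ifs with h
    · have := hc (show (σ.symm i : ℕ) + 1 ≤ j by omega)
      constructor <;> linarith
    · have := hc (show (j : ℕ) + 1 ≤ σ.symm i + 1 by omega)
      have h1 : 0 ≤ c (σ.symm i + 1) := by
        simpa [c, chain_of_lt _ (Nat.lt_succ_self n)] using
          hc (show (σ.symm i : ℕ) + 1 ≤ n + 1 by omega)
      constructor <;> linarith
  refine ⟨fun i => ⟨z i + if (σ.symm i : ℕ) < j then 1 else 0, ?_⟩,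
    fun i => abs_lt.2 ⟨by linarith [hd i], by linarith [hd i]⟩,
    fun i i' => by linarith [hd i, hd i']⟩
  simp only [vertex, OrderSimplex.vertex]
  split_ifs <;> simp

theorem exists_eq_vertex {y w : Fin n → ℝ} (hy : coord z σ y ∈ stdSimplex ℝ (Fin (n + 1)))
    (hw : IsCarrierVertex y w) : ∃ j, w = vertex z σ j := by
  obtain ⟨hint, hnear, hdiam⟩ := hw
  rw [coord_apply, OrderSimplex.coord_mem_stdSimplex_iff] at hy
  obtain ⟨hanti, hbd⟩ := hy
  set b : Fin n → ℝ := fun m => w (σ m) - z (σ m)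
  have h01 : ∀ m, b m = 0 ∨ b m = 1 := by
    intro m
    obtain ⟨a, ha⟩ := hint (σ m)
    have hy' := abs_lt.1 (hnear (σ m))
    have hm := hbd m
    rw [ha] at hy'
    have hlow : (-1 : ℤ) < a - z (σ m) := by
      have : (-1 : ℝ) < a - z (σ m) := by linarith
      exact_mod_cast this
    have hhigh : a - z (σ m) < (2 : ℤ) := by
      have : (a : ℝ) - z (σ m) < 2 := by linarith
      exact_mod_cast this
    have : a - z (σ m) = 0 ∨ a - z (σ m) = 1 := by omega
    simp only [b, ha]
    exact_mod_cast this
  have hb : Antitone b := by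
    intro m m' hmm'
    rcases h01 m with h | h <;> rcases h01 m' with h' | h' <;> rw [h, h'] <;> try norm_num
    have := hdiam (σ m) (σ m')
    have := hanti hmm'
    simp only [b] at h h' ⊢
    linarith
  obtain ⟨j, hj⟩ := OrderSimplex.exists_eq_vertex hb h01
  refine ⟨j, funext fun i => ?_⟩
  have := congrFun hj (σ.symm i)
  simp only [b, Equiv.apply_symm_apply] at this
  simp [vertex, ← this]

theorem convexHull_range_vertex_inter (z' : Fin n → ℤ) (σ' : Equiv.Perm (Fin n)) :
    convexHull ℝ (range (vertex z σ)) ∩ convexHull ℝ (range (vertex z' σ')) =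
      convexHull ℝ (range (vertex z σ) ∩ range (vertex z' σ')) := by
  refine Subset.antisymm ?_
    (subset_inter (convexHull_mono inter_subset_left) (convexHull_mono inter_subset_right))
  rintro y ⟨hy, hy'⟩
  rw [convexHull_range_vertex] at hy hy'
  refine convexHull_mono ?_
    (mem_convexHull_image_support (coord_injective z σ) (coord_vertex z σ) hy)
  rintro _ ⟨j, hj, rfl⟩
  obtain ⟨j', hj'⟩ := exists_eq_vertex hy' (isCarrierVertex_vertex hy hj)
  exact ⟨mem_range_self j, j', hj'.symm⟩

def Admissible (k : ℕ) (z : Fin n → ℤ) (σ : Equiv.Perm (Fin n)) : Prop :=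
  ∀ j, scaledCoord k (vertex z σ j) ∈ stdSimplex ℝ (Fin (n + 1))

variable {k : ℕ}

theorem admissible_of_antitone (hk : 0 < k) (hz : ∀ i, 0 ≤ z i ∧ z i + 1 ≤ k)
    (hz_anti : Antitone z) (hσ : ∀ i i', i ≤ i' → z i' = z i → σ.symm i ≤ σ.symm i') :
    Admissible k z σ := by
  refine fun j => (scaledCoord_mem_stdSimplex_iff hk).2 ⟨fun i i' hii' => ?_, fun i => ?_⟩
  · simp only [vertex, OrderSimplex.vertex]
    rcases (hz_anti hii').lt_or_eq with hlt | heq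
    · have : (z i' : ℝ) + 1 ≤ z i := by exact_mod_cast hlt
      split_ifs <;> linarith
    · have := Fin.le_def.1 (hσ i i' hii' heq)
      rw [heq]
      split_ifs <;> norm_num
      omega
  · have h0 : (0 : ℝ) ≤ z i := by exact_mod_cast (hz i).1
    have h1 : (z i : ℝ) + 1 ≤ k := by exact_mod_cast (hz i).2
    simp only [vertex, OrderSimplex.vertex]
    split_ifs <;> constructor <;> linarith

theorem exists_admissible_mem_convexHull (hk : 0 < k) {u : Fin n → ℝ}
    (hu : scaledCoord k u ∈ stdSimplex ℝ (Fin (n + 1))) :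
    ∃ (z : Fin n → ℤ) (σ : Equiv.Perm (Fin n)), (∀ i, z i ∈ Finset.Ico 0 (k : ℤ)) ∧
      Admissible k z σ ∧ u ∈ convexHull ℝ (range (vertex z σ)) := by
  obtain ⟨hanti, hbd⟩ := (scaledCoord_mem_stdSimplex_iff hk).1 hu
  set z : Fin n → ℤ := fun i => min ⌊u i⌋ (k - 1)
  have hz : ∀ i, 0 ≤ z i ∧ z i + 1 ≤ k := fun i =>
    ⟨le_min (Int.floor_nonneg.2 (hbd i).1) (by omega), by
      have := min_le_right ⌊u i⌋ ((k : ℤ) - 1)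
      simp only [z]
      omega⟩
  have hzu : ∀ i, (z i : ℝ) ≤ u i ∧ u i ≤ z i + 1 := by
    intro i
    refine ⟨(Int.cast_le.2 (min_le_left _ _)).trans (Int.floor_le _), ?_⟩
    rcases min_choice ⌊u i⌋ (k - 1) with h | h <;> simp only [z, h]
    · exact (Int.lt_floor_add_one _).le
    · push_cast; linarith [(hbd i).2]
  -- sort the coordinates by decreasing `u i - z i`, breaking ties by the index
  set κ : Fin n → ℝ ×ₗ Fin n := fun i => toLex (z i - u i, i)
  have hκ : Injective κ := fun i i' h => congrArg Prod.snd (toLex.injective h)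
  obtain ⟨σ, hσ⟩ : ∃ σ : Equiv.Perm (Fin n), StrictMono (κ ∘ σ) :=
    ⟨_, (Tuple.monotone_sort κ).strictMono_of_injective (hκ.comp (Equiv.injective _))⟩
  refine ⟨z, σ, fun i => Finset.mem_Ico.2 ⟨(hz i).1, by linarith [(hz i).2]⟩,
    admissible_of_antitone hk hz (fun i i' h => min_le_min_right _ (Int.floor_mono (hanti h)))
      fun i i' hii' heq => hσ.le_iff_le.1 ?_, ?_⟩
  · simp only [κ, comp_apply, Equiv.apply_symm_apply]
    exact Prod.Lex.toLex_le_toLex'.2 ⟨by rw [heq]; linarith [hanti hii'], fun _ => hii'⟩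
  · rw [convexHull_range_vertex, mem_preimage, coord_apply, OrderSimplex.coord_mem_stdSimplex_iff]
    refine ⟨fun a b hab => ?_, fun m => ⟨by linarith [hzu (σ m)], by linarith [hzu (σ m)]⟩⟩
    have := (Prod.Lex.toLex_le_toLex'.1 (hσ.monotone hab)).1
    simp only at this
    linarith

open Classical in
noncomputable def cell (k : ℕ) (z : Fin n → ℤ) (σ : Equiv.Perm (Fin n)) :
    Finset (Fin (n + 1) → ℝ) :=
  Finset.univ.image (scaledCoord k ∘ vertex z σ)

theorem coe_cell :
    (cell k z σ : Set (Fin (n + 1) → ℝ)) = scaledCoord k '' range (vertex z σ) := by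
  rw [cell, Finset.coe_image, Finset.coe_univ, image_univ, range_comp]

theorem affineIndependent_scaledCoord_comp_vertex (hk : k ≠ 0) :
    AffineIndependent ℝ (scaledCoord k ∘ vertex z σ) :=
  (affineIndependent_vertex z σ).map' _ (scaledCoord_injective hk)

theorem card_cell (hk : k ≠ 0) : (cell k z σ).card = n + 1 := by
  classical
  rw [cell, Finset.card_image_of_injective _
    (affineIndependent_scaledCoord_comp_vertex hk).injective, Finset.card_univ, Fintype.card_fin]

theorem affineIndependent_cell (hk : k ≠ 0) :
    AffineIndependent ℝ (Subtype.val : {x // x ∈ cell k z σ} → Fin (n + 1) → ℝ) := by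
  have := (affineIndependent_scaledCoord_comp_vertex (z := z) (σ := σ) hk).range
  rwa [range_comp, ← coe_cell] at this

theorem convexHull_cell_inter (hk : k ≠ 0) (z' : Fin n → ℤ) (σ' : Equiv.Perm (Fin n)) :
    convexHull ℝ (cell k z σ : Set (Fin (n + 1) → ℝ)) ∩ convexHull ℝ (cell k z' σ') =
      convexHull ℝ ((cell k z σ ∩ cell k z' σ' : Finset _) : Set (Fin (n + 1) → ℝ)) := by
  rw [Finset.coe_inter, coe_cell, coe_cell]
  exact convexHull_image_inter_of_injective (scaledCoord_injective hk)
    (convexHull_range_vertex_inter z' σ')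

theorem convexHull_cell_subset (h : Admissible k z σ) :
    convexHull ℝ (cell k z σ : Set (Fin (n + 1) → ℝ)) ⊆ stdSimplex ℝ (Fin (n + 1)) := by
  refine convexHull_min ?_ (convex_stdSimplex ℝ _)
  rw [coe_cell]
  rintro _ ⟨_, ⟨j, rfl⟩, rfl⟩
  exact h j

theorem dist_le_of_mem_cell {u v : Fin (n + 1) → ℝ} (hu : u ∈ cell k z σ) (hv : v ∈ cell k z σ) :
    dist u v ≤ 2 / k := by
  rw [← Finset.mem_coe, coe_cell] at hu hv
  obtain ⟨_, ⟨j, rfl⟩, rfl⟩ := hu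
  obtain ⟨_, ⟨j', rfl⟩, rfl⟩ := hv
  calc dist _ _ ≤ 2 / k * dist (vertex z σ j) (vertex z σ j') :=
        dist_scaledCoord_le _ _
    _ ≤ 2 / k := mul_le_of_le_one_right (by positivity) (dist_vertex_le z σ j j')

open Classical in
noncomputable def cells (n k : ℕ) : Finset (Finset (Fin (n + 1) → ℝ)) :=
  (((Fintype.piFinset fun _ => Finset.Ico (0 : ℤ) k) ×ˢ Finset.univ).filter
    fun p => Admissible k p.1 p.2).image fun p => cell k p.1 p.2

theorem mem_cells {s : Finset (Fin (n + 1) → ℝ)} :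
    s ∈ cells n k ↔ ∃ (z : Fin n → ℤ) (σ : Equiv.Perm (Fin n)),
      (∀ i, z i ∈ Finset.Ico 0 (k : ℤ)) ∧ Admissible k z σ ∧ cell k z σ = s := by
  simp [cells, and_assoc]

noncomputable def triangulation (n k : ℕ) (hk : 0 < k) : Triangulation n where
  cells := cells n k
  card_cells s hs := by
    obtain ⟨z, σ, -, -, rfl⟩ := mem_cells.1 hs
    exact card_cell hk.ne'
  indep s hs := by
    obtain ⟨z, σ, -, -, rfl⟩ := mem_cells.1 hs
    exact affineIndependent_cell hk.ne'
  covers := by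
    refine Subset.antisymm (iUnion₂_subset fun s hs => ?_) fun x hx => ?_
    · obtain ⟨z, σ, -, hadm, rfl⟩ := mem_cells.1 hs
      exact convexHull_cell_subset hadm
    · obtain ⟨u, rfl⟩ := stdSimplex_subset_range_scaledCoord hk.ne' hx
      obtain ⟨z, σ, hz, hadm, hu⟩ := exists_admissible_mem_convexHull hk hx
      refine mem_biUnion (mem_cells.2 ⟨z, σ, hz, hadm, rfl⟩) ?_
      rw [coe_cell, ← AffineMap.image_convexHull]
      exact mem_image_of_mem _ hu
  face_to_face s hs t ht := by
    obtain ⟨z, σ, -, -, rfl⟩ := mem_cells.1 hs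
    obtain ⟨z', σ', -, -, rfl⟩ := mem_cells.1 ht
    exact convexHull_cell_inter hk.ne' z' σ'

end Kuhn

theorem exists_triangulation_dist_lt (n : ℕ) {δ : ℝ} (hδ : 0 < δ) :
    ∃ T : Triangulation n, ∀ s ∈ T.cells, ∀ u ∈ s, ∀ v ∈ s, dist u v < δ := by
  obtain ⟨k, hk⟩ := exists_nat_gt (2 / δ)
  have hk₀ : (0 : ℝ) < k := (div_pos two_pos hδ).trans hk
  refine ⟨Kuhn.triangulation n k (Nat.cast_pos.1 hk₀), fun s hs u hu v hv => ?_⟩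
  obtain ⟨z, σ, -, -, rfl⟩ := Kuhn.mem_cells.1 hs
  calc dist u v ≤ 2 / k := Kuhn.dist_le_of_mem_cell hu hv
    _ < δ := (div_lt_iff₀ hk₀).2 (by rw [div_lt_iff₀ hδ] at hk; linarith)

theorem Triangulation.mem_stdSimplex_of_mem_cells {n : ℕ} (T : Triangulation n)
    {s : Finset (Fin (n + 1) → ℝ)} (hs : s ∈ T.cells) {v : Fin (n + 1) → ℝ} (hv : v ∈ s) :
    v ∈ stdSimplex ℝ (Fin (n + 1)) :=
  T.covers ▸ mem_biUnion hs (subset_convexHull ℝ _ hv)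

theorem Triangulation.mem_stdSimplex_of_mem_verts_s10 {n : ℕ} (T : Triangulation n)
    {v : Fin (n + 1) → ℝ} (hv : v ∈ T.verts) : v ∈ stdSimplex ℝ (Fin (n + 1)) := by
  obtain ⟨s, hs, hvs⟩ := Finset.mem_sup.1 hv
  exact T.mem_stdSimplex_of_mem_cells hs hvs

theorem exists_kkm_labelling {n : ℕ} {C : Fin (n + 1) → Set (Fin (n + 1) → ℝ)}
    (hface : ∀ I : Finset (Fin (n + 1)),
      {x ∈ stdSimplex ℝ (Fin (n + 1)) | ∀ i ∉ I, x i = 0} ⊆ ⋃ i ∈ I, C i) :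
    ∃ L : (Fin (n + 1) → ℝ) → Fin (n + 1),
      ∀ v ∈ stdSimplex ℝ (Fin (n + 1)), 0 < v (L v) ∧ v ∈ C (L v) := by
  classical
  have : ∀ v, ∃ i, v ∈ stdSimplex ℝ (Fin (n + 1)) → 0 < v i ∧ v ∈ C i := by
    intro v
    by_cases hv : v ∈ stdSimplex ℝ (Fin (n + 1))
    · obtain ⟨i, hi, hvi⟩ := mem_iUnion₂.1 <|
        hface (Finset.univ.filter fun i => v i ≠ 0) ⟨hv, fun i hi => by simpa using hi⟩
      exact ⟨i, fun _ => ⟨(hv.1 i).lt_of_ne' (Finset.mem_filter.1 hi).2, hvi⟩⟩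
    · exact ⟨0, fun h => absurd h hv⟩
  choose L hL using this
  exact ⟨L, hL⟩

/-- Sperner's lemma implies the KKM lemma in dimension `n`. -/
theorem sperner_implies_kkm (n : ℕ)
    (sperner : ∀ T : Triangulation n, ∀ L : (Fin (n + 1) → ℝ) → Fin (n + 1),
      IsSpernerLabelling T L →
        ∃ s ∈ T.cells, s.image L = (Finset.univ : Finset (Fin (n + 1))))
    (C : Fin (n + 1) → Set (Fin (n + 1) → ℝ)) (hC : ∀ i, IsClosed (C i))
    (hface : ∀ I : Finset (Fin (n + 1)),
      {x ∈ stdSimplex ℝ (Fin (n + 1)) | ∀ i ∉ I, x i = 0} ⊆ ⋃ i ∈ I, C i) :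
    ∃ x ∈ stdSimplex ℝ (Fin (n + 1)), ∀ i, x ∈ C i := by
  by_contra! hempty
  obtain ⟨δ, hδ, hball⟩ := lebesgue_number_lemma_of_metric (isCompact_stdSimplex ℝ (Fin (n + 1)))
    (fun i => (hC i).isOpen_compl) fun x hx => mem_iUnion.2 (hempty x hx)
  obtain ⟨T, hT⟩ := exists_triangulation_dist_lt n hδ
  obtain ⟨L, hL⟩ := exists_kkm_labelling hface
  obtain ⟨s, hs, hsL⟩ := sperner T L fun v hv => (hL v (T.mem_stdSimplex_of_mem_verts_s10 hv)).1
  have hlabels : ∀ i, ∃ v ∈ s, L v = i := fun i =>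
    Finset.mem_image.1 (hsL ▸ Finset.mem_univ i)
  choose v hvs hvL using hlabels
  have hvC : ∀ i, v i ∈ C i := fun i => by
    simpa [hvL i] using (hL (v i) (T.mem_stdSimplex_of_mem_cells hs (hvs i))).2
  obtain ⟨i, hi⟩ := hball (v 0) (T.mem_stdSimplex_of_mem_cells hs (hvs 0))
  exact hi (Metric.mem_ball.2 (hT s hs _ (hvs i) _ (hvs 0))) (hvC i)
end

section
/- The KKM lemma implies Brouwer's fixed-point theorem: every continuous map from the standard n-simplex to itself has a fixed point. -/
/-!
The sets `C i` of points of the simplex whose `i`-th coordinate is not increased by `f` are closed,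
and they satisfy the KKM covering condition: on the face spanned by `I`, the coordinates of `x`
indexed by `I` already sum to `1`, so `f x`, which lies in the simplex, cannot exceed `x` in all of
them. A point in all the `C i` has `f x ≤ x` coordinatewise, and since both sides sum to `1` this
forces `f x = x`.
-/

open Finset

variable {𝕜 ι : Type*} [Fintype ι]

def kkmSet [Semiring 𝕜] [PartialOrder 𝕜] (f : (ι → 𝕜) → ι → 𝕜) (i : ι) : Set (ι → 𝕜) :=
  {x ∈ stdSimplex 𝕜 ι | f x i ≤ x i}

theorem isClosed_kkmSet [TopologicalSpace 𝕜] [Semiring 𝕜] [PartialOrder 𝕜]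
    [OrderClosedTopology 𝕜] [ContinuousAdd 𝕜] {f : (ι → 𝕜) → ι → 𝕜}
    (hf : ContinuousOn f (stdSimplex 𝕜 ι)) (i : ι) : IsClosed (kkmSet f i) :=
  (isClosed_stdSimplex 𝕜 ι).isClosed_le ((continuous_apply i).comp_continuousOn hf)
    (continuous_apply i).continuousOn

section StrictOrderedSemiring

variable [Semiring 𝕜] [LinearOrder 𝕜] [IsStrictOrderedRing 𝕜]

theorem exists_apply_le_of_mem_stdSimplex_of_support_subset {x y : ι → 𝕜}
    (hx : x ∈ stdSimplex 𝕜 ι) {I : Finset ι} (hxI : ∀ i ∉ I, x i = 0) (hy : y ∈ stdSimplex 𝕜 ι) :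
    ∃ i ∈ I, y i ≤ x i := by
  have hsum : ∑ i ∈ I, x i = 1 := by
    rw [← hx.2, sum_subset (subset_univ I) fun i _ hi => hxI i hi]
  refine exists_le_of_sum_le (nonempty_of_sum_ne_zero (hsum ▸ one_ne_zero)) ?_
  calc ∑ i ∈ I, y i ≤ ∑ i, y i := sum_le_sum_of_subset_of_nonneg (subset_univ I) fun i _ _ => hy.1 i
    _ = ∑ i ∈ I, x i := by rw [hy.2, hsum]

theorem eq_of_mem_stdSimplex_of_le {x y : ι → 𝕜} (hx : x ∈ stdSimplex 𝕜 ι)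
    (hy : y ∈ stdSimplex 𝕜 ι) (hyx : ∀ i, y i ≤ x i) : y = x :=
  funext fun i => (sum_eq_sum_iff_of_le fun i _ => hyx i).mp (hy.2.trans hx.2.symm) i (mem_univ i)

variable {f : (ι → 𝕜) → ι → 𝕜}

theorem face_subset_biUnion_kkmSet (hmaps : Set.MapsTo f (stdSimplex 𝕜 ι) (stdSimplex 𝕜 ι))
    (I : Finset ι) :
    {x ∈ stdSimplex 𝕜 ι | ∀ i ∉ I, x i = 0} ⊆ ⋃ i ∈ I, kkmSet f i := by
  rintro x ⟨hx, hxI⟩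
  obtain ⟨i, hi, hle⟩ := exists_apply_le_of_mem_stdSimplex_of_support_subset hx hxI (hmaps hx)
  exact Set.mem_biUnion hi ⟨hx, hle⟩

theorem eq_of_forall_mem_kkmSet (hmaps : Set.MapsTo f (stdSimplex 𝕜 ι) (stdSimplex 𝕜 ι))
    {x : ι → 𝕜} (hx : x ∈ stdSimplex 𝕜 ι)
    (hxC : ∀ i, x ∈ kkmSet f i) : f x = x :=
  eq_of_mem_stdSimplex_of_le hx (hmaps hx) fun i => (hxC i).2

end StrictOrderedSemiring

/-- The KKM lemma (in dimension `n`) implies Brouwer's fixed-point theorem for the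
standard `n`-simplex. -/
theorem kkm_implies_brouwer (n : ℕ)
    (kkm : ∀ C : Fin (n + 1) → Set (Fin (n + 1) → ℝ), (∀ i, IsClosed (C i)) →
      (∀ I : Finset (Fin (n + 1)),
        {x ∈ stdSimplex ℝ (Fin (n + 1)) | ∀ i ∉ I, x i = 0} ⊆ ⋃ i ∈ I, C i) →
      ∃ x ∈ stdSimplex ℝ (Fin (n + 1)), ∀ i, x ∈ C i)
    (f : (Fin (n + 1) → ℝ) → (Fin (n + 1) → ℝ))
    (hf : ContinuousOn f (stdSimplex ℝ (Fin (n + 1))))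
    (hmaps : Set.MapsTo f (stdSimplex ℝ (Fin (n + 1))) (stdSimplex ℝ (Fin (n + 1)))) :
    ∃ x ∈ stdSimplex ℝ (Fin (n + 1)), f x = x := by
  obtain ⟨x, hx, hxC⟩ :=
    kkm (kkmSet f) (isClosed_kkmSet hf) (face_subset_biUnion_kkmSet hmaps)
  exact ⟨x, hx, eq_of_forall_mem_kkmSet hmaps hx hxC⟩
end

section
/- Brouwer's fixed-point theorem implies the Poincaré–Miranda theorem: assuming every continuous self-map of the n-cube has a fixed point, any continuous f : [-1,1]^n → ℝ^n satisfying the Miranda boundary sign conditions has a zero. -/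
/-- Brouwer's fixed-point theorem for the cube `[-1,1]^n` implies the
Poincaré–Miranda theorem. -/
theorem brouwer_implies_poincare_miranda (n : ℕ)
    (brouwer : ∀ g : (Fin n → ℝ) → (Fin n → ℝ),
      ContinuousOn g (Set.Icc (-1 : Fin n → ℝ) 1) →
      Set.MapsTo g (Set.Icc (-1 : Fin n → ℝ) 1) (Set.Icc (-1 : Fin n → ℝ) 1) →
        ∃ x ∈ Set.Icc (-1 : Fin n → ℝ) 1, g x = x)
    (f : (Fin n → ℝ) → (Fin n → ℝ))
    (hf : ContinuousOn f (Set.Icc (-1 : Fin n → ℝ) 1))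
    (hlo : ∀ x ∈ Set.Icc (-1 : Fin n → ℝ) 1, ∀ i, x i = -1 → f x i ≤ 0)
    (hhi : ∀ x ∈ Set.Icc (-1 : Fin n → ℝ) 1, ∀ i, x i = 1 → 0 ≤ f x i) :
    ∃ c ∈ Set.Icc (-1 : Fin n → ℝ) 1, f c = 0 := by
  set g : (Fin n → ℝ) → (Fin n → ℝ) :=
    fun x i => max (-1) (min 1 (x i - f x i)) with hg
  have hgc : ContinuousOn g (Set.Icc (-1 : Fin n → ℝ) 1) := by
    apply continuousOn_pi.2
    intro i
    have h1 : ContinuousOn (fun x => x i - f x i) (Set.Icc (-1 : Fin n → ℝ) 1) :=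
      ((continuous_apply i).continuousOn).sub ((continuous_apply i).comp_continuousOn hf)
    exact ContinuousOn.sup continuousOn_const (ContinuousOn.inf continuousOn_const h1)
  have hgm : Set.MapsTo g (Set.Icc (-1 : Fin n → ℝ) 1)
      (Set.Icc (-1 : Fin n → ℝ) 1) := by
    intro x _
    constructor
    · intro i; exact le_max_left _ _
    · intro i
      exact max_le (by norm_num) (min_le_left _ _)
  obtain ⟨c, hc, hfix⟩ := brouwer g hgc hgm
  refine ⟨c, hc, ?_⟩
  funext i
  have hfixi : max (-1) (min 1 (c i - f c i)) = c i := congrFun hfix i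
  have hci : -1 ≤ c i := hc.1 i
  have hci' : c i ≤ 1 := hc.2 i
  rcases lt_trichotomy (c i - f c i) (-1) with h | h | h
  · have hmin : min 1 (c i - f c i) = c i - f c i :=
      min_eq_right (h.le.trans (by norm_num))
    have : c i = -1 := by
      rw [← hfixi, hmin, max_eq_left h.le]
    have hle := hlo c hc i this
    simp only [Pi.zero_apply]
    linarith
  · have : c i = -1 := by
      rw [← hfixi, min_eq_right (h.le.trans (by norm_num)), h, max_self]
    have hle := hlo c hc i this
    have hge : c i - f c i = -1 := h
    simp only [Pi.zero_apply]
    linarith [this]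
  · rcases le_or_gt (c i - f c i) 1 with h2 | h2
    · have : max (-1) (min 1 (c i - f c i)) = c i - f c i := by
        rw [min_eq_right h2, max_eq_right h.le]
      rw [this] at hfixi
      simp only [Pi.zero_apply]
      linarith
    · have : c i = 1 := by
        rw [← hfixi, min_eq_left h2.le, max_eq_right (by norm_num : (-1:ℝ) ≤ 1)]
      have hge := hhi c hc i this
      simp only [Pi.zero_apply]
      linarith
end
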